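/- arXiv:2602.10990 — 4 statements merged into one kernel-verified Lean document; each statement's English description precedes it below -/
import Mathlib

section
/- Assume the chain condition (CC) and volume doubling (VD). Let Ψ and Υ be doubling functions satisfying UG(Υ,Ψ), let K_Ψ be a kernel satisfying K^{(J)}(Ψ) and K_Υ a kernel satisfying K^{(J)}(Υ), with associated non-local p-forms (E^{(J,Ψ)}, F^{(J,Ψ)}) and (E^{(J,Υ)}, F^{(J,Υ)}). Then F^{(J,Ψ)} ⊆ F^{(J,Υ)}; that is, every u ∈ L^p(X;m) with ∬_{X×X} |u(x)−u(y)|^p K_Ψ(x,y) dm(x)dm(y) < ∞ also satisfies ∬_{X×X} |u(x)−u(y)|^p K_Υ(x,y) dm(x)dm(y) < ∞. -/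
open MeasureTheory Metric Set ENNReal Filter Topology

noncomputable section

namespace NLP

variable {X : Type*} [MetricSpace X] [MeasurableSpace X]

/-- Chain condition (CC). -/
def ChainCondition (X : Type*) [MetricSpace X] : Prop :=
  ∃ C : ℝ, 0 < C ∧ ∀ x y : X, ∀ n : ℕ, 1 ≤ n →
    ∃ c : ℕ → X, c 0 = x ∧ c n = y ∧
      ∀ k : ℕ, 1 ≤ k → k ≤ n → dist (c k) (c (k - 1)) ≤ C * dist x y / n

/-- Volume doubling (VD). -/
def VolumeDoubling (m : Measure X) : Prop :=
  ∃ C : ℝ, 0 < C ∧ ∀ (x : X) (r : ℝ), 0 < r →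
    m (ball x (2 * r)) ≤ ENNReal.ofReal C * m (ball x r)

/-- Standing assumptions on the metric measure space: complete, unbounded, locally compact,
separable, all balls relatively compact, `m` a positive Radon measure with full support. -/
structure GoodSpace (X : Type*) [MetricSpace X] [MeasurableSpace X] (m : Measure X) : Prop where
  complete : CompleteSpace X
  unbounded : ¬ Bornology.IsBounded (Set.univ : Set X)
  locallyCompact : LocallyCompactSpace X
  separable : TopologicalSpace.SeparableSpace X
  ballsRelCompact : ∀ (x : X) (r : ℝ), IsCompact (closure (ball x r))
  fullSupport : ∀ U : Set X, IsOpen U → U.Nonempty → 0 < m U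
  finiteOnCompacts : ∀ S : Set X, IsCompact S → m S < ⊤

/-- A doubling scaling function with doubling constant `CΥ` and exponents `β₁ ≤ β₂`. -/
structure IsDoubling (Υ : ℝ → ℝ) (CΥ β₁ β₂ : ℝ) : Prop where
  map_zero : Υ 0 = 0
  strictMonoOn : StrictMonoOn Υ (Set.Ici 0)
  continuousOn : ContinuousOn Υ (Set.Ici 0)
  surjOn : ∀ y : ℝ, 0 ≤ y → ∃ x : ℝ, 0 ≤ x ∧ Υ x = y
  one_lt : 1 < CΥ
  β₁_pos : 0 < β₁
  β₁_le_β₂ : β₁ ≤ β₂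
  doubling : ∀ r : ℝ, 0 < r → Υ (2 * r) ≤ CΥ * Υ r
  lower : ∀ r R : ℝ, 0 < r → r ≤ R → 1 / CΥ * (R / r) ^ β₁ ≤ Υ R / Υ r
  upper : ∀ r R : ℝ, 0 < r → r ≤ R → Υ R / Υ r ≤ CΥ * (R / r) ^ β₂

/-- A doubling scaling function (constants existentially quantified). -/
def DoublingFunction (Υ : ℝ → ℝ) : Prop := ∃ CΥ β₁ β₂ : ℝ, IsDoubling Υ CΥ β₁ β₂

/-- The upper growth condition UG(Υ,Ψ): Υ grows no faster than Ψ. -/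
def UG (Υ Ψ : ℝ → ℝ) : Prop :=
  ∃ C : ℝ, 1 ≤ C ∧ ∀ r R : ℝ, 0 < r → r ≤ R → Υ R / Υ r ≤ C * (Ψ R / Ψ r)

/-- A jump kernel comparable to `1/(V(x,d(x,y))·Υ(d(x,y)))`, i.e. condition K^{(J)}(Υ). -/
structure IsKernel (m : Measure X) (Υ : ℝ → ℝ) (K : X → X → ℝ≥0∞) : Prop where
  symm : ∀ x y : X, K x y = K y x
  meas : Measurable (Function.uncurry K)
  bounds : ∃ C₁ C₂ : ℝ, 0 < C₁ ∧ C₁ ≤ C₂ ∧ ∀ x y : X, x ≠ y →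
    ENNReal.ofReal C₁ / (m (ball x (dist x y)) * ENNReal.ofReal (Υ (dist x y))) ≤ K x y ∧
    K x y ≤ ENNReal.ofReal C₂ / (m (ball x (dist x y)) * ENNReal.ofReal (Υ (dist x y)))

/-- The non-local `p`-energy `E^{(J)}`. -/
def energy (m : Measure X) (K : X → X → ℝ≥0∞) (p : ℝ) (u : X → ℝ) : ℝ≥0∞ :=
  ∫⁻ x, (∫⁻ y, ENNReal.ofReal (|u x - u y| ^ p) * K x y ∂m) ∂m

/-- `‖u‖_{L^p}^p` as a lower integral. -/
def lpNormP (m : Measure X) (p : ℝ) (u : X → ℝ) : ℝ≥0∞ :=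
  ∫⁻ x, ENNReal.ofReal (|u x| ^ p) ∂m

/-- `E^{(J)}_1(u) = E^{(J)}(u) + ‖u‖_p^p`. -/
def energy1 (m : Measure X) (K : X → X → ℝ≥0∞) (p : ℝ) (u : X → ℝ) : ℝ≥0∞ :=
  energy m K p u + lpNormP m p u

/-- The domain `F^{(J)}`. -/
def domain (m : Measure X) (K : X → X → ℝ≥0∞) (p : ℝ) : Set (X → ℝ) :=
  {u | MemLp u (ENNReal.ofReal p) m ∧ energy m K p u < ⊤}

/-- The extended domain `F̂^{(J)} = {u + a : u ∈ F^{(J)}, a ∈ ℝ}`. -/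
def domainHat (m : Measure X) (K : X → X → ℝ≥0∞) (p : ℝ) : Set (X → ℝ) :=
  {u | ∃ v ∈ domain m K p, ∃ a : ℝ, u = fun x => v x + a}

/-- `Γ^{(J)}_Ω(u)(A) = ∫_A ∫_Ω |u(x)−u(y)|^p K(x,y) dm(y) dm(x)`. -/
def gamma (m : Measure X) (K : X → X → ℝ≥0∞) (p : ℝ) (Ω : Set X) (u : X → ℝ)
    (A : Set X) : ℝ≥0∞ :=
  ∫⁻ x in A, (∫⁻ y in Ω, ENNReal.ofReal (|u x - u y| ^ p) * K x y ∂m) ∂m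

/-- `∫_A |f|^p dΓ^{(J)}_Ω(φ)`. -/
def gammaInt (m : Measure X) (K : X → X → ℝ≥0∞) (p : ℝ) (Ω : Set X) (φ f : X → ℝ)
    (A : Set X) : ℝ≥0∞ :=
  ∫⁻ x in A, ENNReal.ofReal (|f x| ^ p) *
    (∫⁻ y in Ω, ENNReal.ofReal (|φ x - φ y| ^ p) * K x y ∂m) ∂m

/-- A cutoff function for `U ⊆ V`: `0 ≤ φ ≤ 1` a.e., `φ = 1` a.e. on an open neighbourhood of
`closure U`, and the `m`-essential support of `φ` is contained in `V`. -/
structure IsCutoff (m : Measure X) (φ : X → ℝ) (U V : Set X) : Prop where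
  bounds : ∀ᵐ x ∂m, 0 ≤ φ x ∧ φ x ≤ 1
  eq_one : ∃ W : Set X, IsOpen W ∧ closure U ⊆ W ∧ ∀ᵐ x ∂m, x ∈ W → φ x = 1
  support : ∃ S : Set X, IsClosed S ∧ S ⊆ V ∧ ∀ᵐ x ∂m, x ∉ S → φ x = 0

/-- The defining inequality of the cutoff Sobolev condition CS^{(J)}. -/
def CSineq (m : Measure X) (K : X → X → ℝ≥0∞) (p : ℝ) (Υ : ℝ → ℝ)
    (C₁ C₂ A₂ : ℝ) (x₀ : X) (r : ℝ) (φ : X → ℝ) : Prop :=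
  ∀ f ∈ domainHat m K p,
    gammaInt m K p (ball x₀ (A₂ * r)) φ f (ball x₀ (A₂ * r)) ≤
      ENNReal.ofReal C₁ * gamma m K p (ball x₀ (A₂ * r)) f (ball x₀ (A₂ * r)) +
      ENNReal.ofReal C₂ / ENNReal.ofReal (Υ r) *
        ∫⁻ x in ball x₀ (A₂ * r), ENNReal.ofReal (|f x| ^ p) ∂m

/-- CS^{(J)}_weak(Υ). -/
def CSweak (m : Measure X) (K : X → X → ℝ≥0∞) (p : ℝ) (Υ : ℝ → ℝ) : Prop :=
  ∃ C₁ C₂ A₁ A₂ : ℝ, 0 < C₁ ∧ 0 < C₂ ∧ 1 < A₁ ∧ A₁ < A₂ ∧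
    ∀ (x₀ : X) (r : ℝ), 0 < r → ∃ φ ∈ domain m K p,
      IsCutoff m φ (ball x₀ r) (ball x₀ (A₁ * r)) ∧ CSineq m K p Υ C₁ C₂ A₂ x₀ r φ

/-- CS^{(J)}_cont(Υ). -/
def CScont (m : Measure X) (K : X → X → ℝ≥0∞) (p : ℝ) (Υ : ℝ → ℝ) : Prop :=
  ∃ C₁ C₂ A₁ A₂ : ℝ, 0 < C₁ ∧ 0 < C₂ ∧ 1 < A₁ ∧ A₁ < A₂ ∧
    ∀ (x₀ : X) (r : ℝ), 0 < r → ∃ φ ∈ domain m K p, Continuous φ ∧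
      IsCutoff m φ (ball x₀ r) (ball x₀ (A₁ * r)) ∧ CSineq m K p Υ C₁ C₂ A₂ x₀ r φ

/-- CS^{(J)}_strong(Υ). -/
def CSstrong (m : Measure X) (K : X → X → ℝ≥0∞) (p : ℝ) (Υ : ℝ → ℝ) : Prop :=
  ∃ δ C C₁ C₂ A₁ A₂ : ℝ, 0 < δ ∧ δ < 1 ∧ 0 < C ∧ 0 < C₁ ∧ 0 < C₂ ∧ 1 < A₁ ∧ A₁ < A₂ ∧
    ∀ (x₀ : X) (r : ℝ), 0 < r → ∃ φ ∈ domain m K p,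
      (∀ x y : X, |φ x - φ y| ≤ C * min (dist x y / r) 1 ^ δ) ∧
      IsCutoff m φ (ball x₀ r) (ball x₀ (A₁ * r)) ∧ CSineq m K p Υ C₁ C₂ A₂ x₀ r φ

/-- The defining inequality of the cutoff energy condition CE^{(J)}. -/
def CEineq (m : Measure X) (K : X → X → ℝ≥0∞) (p : ℝ) (Υ : ℝ → ℝ)
    (C δ : ℝ) (r : ℝ) (φ : X → ℝ) : Prop :=
  ∀ (x : X) (s : ℝ), 0 < s →
    gamma m K p Set.univ φ (ball x s) ≤
      ENNReal.ofReal (C * min (s / r) 1 ^ δ) * m (ball x s) /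
        ENNReal.ofReal (Υ (min s r))

/-- CE^{(J)}_weak(Υ). -/
def CEweak (m : Measure X) (K : X → X → ℝ≥0∞) (p : ℝ) (Υ : ℝ → ℝ) : Prop :=
  ∃ δ A C : ℝ, 0 < δ ∧ δ < 1 ∧ 1 < A ∧ 0 < C ∧
    ∀ (x₀ : X) (r : ℝ), 0 < r → ∃ φ ∈ domain m K p,
      IsCutoff m φ (ball x₀ r) (ball x₀ (A * r)) ∧ CEineq m K p Υ C δ r φ

/-- CE^{(J)}_cont(Υ). -/
def CEcont (m : Measure X) (K : X → X → ℝ≥0∞) (p : ℝ) (Υ : ℝ → ℝ) : Prop :=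
  ∃ δ A C : ℝ, 0 < δ ∧ δ < 1 ∧ 1 < A ∧ 0 < C ∧
    ∀ (x₀ : X) (r : ℝ), 0 < r → ∃ φ ∈ domain m K p, Continuous φ ∧
      IsCutoff m φ (ball x₀ r) (ball x₀ (A * r)) ∧ CEineq m K p Υ C δ r φ

/-- CE^{(J)}_strong(Υ). -/
def CEstrong (m : Measure X) (K : X → X → ℝ≥0∞) (p : ℝ) (Υ : ℝ → ℝ) : Prop :=
  ∃ δ A C : ℝ, 0 < δ ∧ δ < 1 ∧ 1 < A ∧ 0 < C ∧
    ∀ (x₀ : X) (r : ℝ), 0 < r → ∃ φ ∈ domain m K p,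
      (∀ x y : X, |φ x - φ y| ≤ C * min (dist x y / r) 1 ^ δ) ∧
      IsCutoff m φ (ball x₀ r) (ball x₀ (A * r)) ∧ CEineq m K p Υ C δ r φ

/-- `(E^{(J)}, F^{(J)})` is a regular `p`-energy. -/
structure IsRegularEnergy (m : Measure X) (K : X → X → ℝ≥0∞) (p : ℝ) : Prop where
  denseLp : ∀ u : X → ℝ, MemLp u (ENNReal.ofReal p) m → ∀ ε : ℝ, 0 < ε →
    ∃ v ∈ domain m K p, lpNormP m p (u - v) < ENNReal.ofReal ε
  complete : ∀ u : ℕ → X → ℝ, (∀ n, u n ∈ domain m K p) →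
    (∀ ε : ℝ, 0 < ε → ∃ N : ℕ, ∀ i j : ℕ, N ≤ i → N ≤ j →
      energy1 m K p (u i - u j) < ENNReal.ofReal ε) →
    ∃ v ∈ domain m K p, Filter.Tendsto (fun n => energy1 m K p (u n - v)) Filter.atTop (nhds 0)
  markov : ∀ φ : ℝ → ℝ, LipschitzWith 1 φ → φ 0 = 0 →
    ∀ f ∈ domain m K p, (φ ∘ f) ∈ domain m K p ∧ energy m K p (φ ∘ f) ≤ energy m K p f
  clarkson_le : p ≤ 2 → ∀ f g : X → ℝ, f ∈ domain m K p → g ∈ domain m K p →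
    2 * (energy m K p f ^ (1 / (p - 1)) + energy m K p g ^ (1 / (p - 1))) ^ (p - 1) ≤
      energy m K p (f + g) + energy m K p (f - g)
  clarkson_ge : 2 ≤ p → ∀ f g : X → ℝ, f ∈ domain m K p → g ∈ domain m K p →
    energy m K p (f + g) + energy m K p (f - g) ≤
      2 * (energy m K p f ^ (1 / (p - 1)) + energy m K p g ^ (1 / (p - 1))) ^ (p - 1)
  regUnif : ∀ g : X → ℝ, Continuous g → HasCompactSupport g → ∀ ε : ℝ, 0 < ε →
    ∃ f ∈ domain m K p, Continuous f ∧ HasCompactSupport f ∧ ∀ x, |g x - f x| ≤ ε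
  regEnergy : ∀ u ∈ domain m K p, ∀ ε : ℝ, 0 < ε →
    ∃ f ∈ domain m K p, Continuous f ∧ HasCompactSupport f ∧
      energy1 m K p (u - f) < ENNReal.ofReal ε

/-- The bilinear form `E^{(J)}(u;v)`. -/
def energyBilin (m : Measure X) (K : X → X → ℝ≥0∞) (p : ℝ) (u v : X → ℝ) : ℝ :=
  ∫ x, (∫ y, |u x - u y| ^ (p - 2) * (u x - u y) * (v x - v y) * (K x y).toReal ∂m) ∂m

/-- Non-negative test functions in `F^{(J)} ∩ C_c(Ω)`. -/
def testFun (m : Measure X) (K : X → X → ℝ≥0∞) (p : ℝ) (Ω : Set X) (φ : X → ℝ) : Prop :=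
  φ ∈ domain m K p ∧ Continuous φ ∧ HasCompactSupport φ ∧ tsupport φ ⊆ Ω ∧ ∀ x, 0 ≤ φ x

/-- `−Δ_p^{(J)} u = f` in `Ω`. -/
def IsSolution (m : Measure X) (K : X → X → ℝ≥0∞) (p : ℝ) (Ω : Set X) (u f : X → ℝ) : Prop :=
  ∀ φ : X → ℝ, testFun m K p Ω φ → energyBilin m K p u φ = ∫ x, f x * φ x ∂m

/-- `−Δ_p^{(J)} u ≥ f` in `Ω`. -/
def IsSupersol (m : Measure X) (K : X → X → ℝ≥0∞) (p : ℝ) (Ω : Set X) (u f : X → ℝ) : Prop :=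
  ∀ φ : X → ℝ, testFun m K p Ω φ → (∫ x, f x * φ x ∂m) ≤ energyBilin m K p u φ

/-- `F^{(J)}(Ω)`: the `(E^{(J)}_1)^{1/p}`-closure of `F^{(J)} ∩ C_c(Ω)`. -/
def domainOn (m : Measure X) (K : X → X → ℝ≥0∞) (p : ℝ) (Ω : Set X) : Set (X → ℝ) :=
  {u | u ∈ domain m K p ∧ ∀ ε : ℝ, 0 < ε →
    ∃ f ∈ domain m K p, Continuous f ∧ HasCompactSupport f ∧ tsupport f ⊆ Ω ∧
      energy1 m K p (u - f) < ENNReal.ofReal ε}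

/-- The non-local tail `Tail^{(J)}(u;x₀,R)`. -/
def tail (m : Measure X) (K : X → X → ℝ≥0∞) (Υ : ℝ → ℝ) (p : ℝ) (u : X → ℝ)
    (x₀ : X) (R : ℝ) : ℝ :=
  (Υ R * (∫⁻ y in (ball x₀ R)ᶜ, ENNReal.ofReal (|u y| ^ (p - 1)) * K x₀ y ∂m).toReal) ^
    (1 / (p - 1))

/-- Essential oscillation of `u` on `A`. -/
def essOsc (m : Measure X) (u : X → ℝ) (A : Set X) : ℝ :=
  essSup u (m.restrict A) - essInf u (m.restrict A)

/-- `u ∈ L^∞(X;m)`. -/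
def BddAe (m : Measure X) (u : X → ℝ) : Prop := ∃ M : ℝ, ∀ᵐ x ∂m, |u x| ≤ M

/-- `X∖Ω` has a `(c,r₀)`-corkscrew at `x₀`. -/
def HasCorkscrew (Ω : Set X) (x₀ : X) (c r₀ : ℝ) : Prop :=
  ∀ r : ℝ, 0 < r → r < r₀ → ∃ z : X, ball z (c * r) ⊆ ball x₀ r \ Ω

/-- The localized energy functional `E_{Υ,U}(u,r)`. -/
def Emod (m : Measure X) (Υ : ℝ → ℝ) (p : ℝ) (U : Set X) (u : X → ℝ) (r : ℝ) : ℝ≥0∞ :=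
  (ENNReal.ofReal (Υ r))⁻¹ *
    ∫⁻ x in U, (m (ball x r))⁻¹ * (∫⁻ y in ball x r, ENNReal.ofReal (|u x - u y| ^ p) ∂m) ∂m

/-- `∬_{U×U'} |u(x)−u(y)|^p / (V(x,d(x,y))·Υ(d(x,y))) dm dm`. -/
def dblInt (m : Measure X) (Υ : ℝ → ℝ) (p : ℝ) (U U' : Set X) (u : X → ℝ) : ℝ≥0∞ :=
  ∫⁻ x in U, (∫⁻ y in U',
    ENNReal.ofReal (|u x - u y| ^ p) /
      (m (ball x (dist x y)) * ENNReal.ofReal (Υ (dist x y))) ∂m) ∂m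

/-!
Split the energy at unit scale. For `d(x,y) < 1`, UG(Υ,Ψ) and the two-sided kernel bounds give
`K_Υ ≤ c K_Ψ`. For `d(x,y) ≥ 1`, use `|u(x) - u(y)|ᵖ ≤ 2ᵖ⁻¹ (|u(x)|ᵖ + |u(y)|ᵖ)`; by the symmetry
of `K_Υ` this part is at most `2ᵖ ‖u‖ₚᵖ sup_x ∫_{d(x,y) ≥ 1} K_Υ(x,y) dm(y)`, and that tail integral
is finite by (VD) and the lower scaling of `Υ`.
-/

lemma IsDoubling.pos {Υ : ℝ → ℝ} {CΥ β₁ β₂ : ℝ} (hΥ : IsDoubling Υ CΥ β₁ β₂) {r : ℝ}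
    (hr : 0 < r) : 0 < Υ r := by
  simpa [hΥ.map_zero] using hΥ.strictMonoOn Set.self_mem_Ici (Set.mem_Ici.mpr hr.le) hr

lemma IsDoubling.inv_le_two_pow_mul {Υ : ℝ → ℝ} {CΥ β₁ β₂ : ℝ} (hΥ : IsDoubling Υ CΥ β₁ β₂)
    {R : ℝ} (hR : 0 < R) (k : ℕ) :
    (Υ (2 ^ k * R))⁻¹ ≤ CΥ * ((2 : ℝ) ^ β₁)⁻¹ ^ k / Υ R := by
  have hΥR := hΥ.pos hR
  have hCΥ : 0 < CΥ := one_pos.trans hΥ.one_lt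
  have hpow : ((2 : ℝ) ^ k) ^ β₁ = ((2 : ℝ) ^ β₁) ^ k := by
    rw [← Real.rpow_natCast, ← Real.rpow_mul zero_le_two, mul_comm, Real.rpow_mul zero_le_two,
      Real.rpow_natCast]
  have hlower := hΥ.lower R (2 ^ k * R) hR (le_mul_of_one_le_left hR.le (one_le_pow₀ one_le_two))
  rw [mul_div_cancel_right₀ _ hR.ne', hpow, le_div_iff₀ hΥR] at hlower
  rw [inv_pow, inv_le_comm₀ (hΥ.pos (by positivity)) (by positivity)]
  calc (CΥ * (((2 : ℝ) ^ β₁) ^ k)⁻¹ / Υ R)⁻¹ = 1 / CΥ * ((2 : ℝ) ^ β₁) ^ k * Υ R := by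
        field_simp
    _ ≤ Υ (2 ^ k * R) := hlower

lemma ofReal_div_mul_ofReal (V : ℝ≥0∞) (a : ℝ) {b : ℝ} (hb : 0 < b) :
    ENNReal.ofReal a / (V * ENNReal.ofReal b) = ENNReal.ofReal (a / b) * V⁻¹ := by
  rw [ENNReal.ofReal_div_of_pos hb, div_eq_mul_inv, div_eq_mul_inv,
    ENNReal.mul_inv (Or.inr ofReal_ne_top) (Or.inr (ENNReal.ofReal_pos.2 hb).ne'), mul_comm V⁻¹,
    mul_assoc]

lemma IsKernel.exists_le_const_mul_of_dist_le {m : Measure X} {Ψ Υ : ℝ → ℝ}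
    {CΨ βΨ₁ βΨ₂ CΥ βΥ₁ βΥ₂ : ℝ} (hΨ : IsDoubling Ψ CΨ βΨ₁ βΨ₂) (hΥ : IsDoubling Υ CΥ βΥ₁ βΥ₂)
    (hUG : UG Υ Ψ) {KΨ KΥ : X → X → ℝ≥0∞} (hKΨ : IsKernel m Ψ KΨ) (hKΥ : IsKernel m Υ KΥ)
    {R : ℝ} (hR : 0 < R) :
    ∃ c : ℝ≥0∞, c ≠ ⊤ ∧ ∀ x y : X, x ≠ y → dist x y ≤ R → KΥ x y ≤ c * KΨ x y := by
  obtain ⟨CU, -, hug⟩ := hUG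
  obtain ⟨A₁, A₂, hA₁, hA₁₂, hbΥ⟩ := hKΥ.bounds
  obtain ⟨B₁, _, hB₁, _, hbΨ⟩ := hKΨ.bounds
  have hA₂ : 0 ≤ A₂ / Υ R := div_nonneg (hA₁.le.trans hA₁₂) (hΥ.pos hR).le
  set c : ℝ := A₂ / Υ R * CU * Ψ R / B₁
  refine ⟨ENNReal.ofReal c, ofReal_ne_top, fun x y hxy hd => ?_⟩
  have hd0 : 0 < dist x y := dist_pos.mpr hxy
  have hΥd := hΥ.pos hd0
  have hΨd := hΨ.pos hd0
  have hreal : A₂ / Υ (dist x y) ≤ c * (B₁ / Ψ (dist x y)) := by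
    have hcB : c * (B₁ / Ψ (dist x y)) = A₂ / Υ R * (CU * (Ψ R / Ψ (dist x y))) := by
      simp only [c]; field_simp
    have hA₂R : A₂ / Υ (dist x y) = A₂ / Υ R * (Υ R / Υ (dist x y)) := by
      field_simp [(hΥ.pos hR).ne']
    rw [hcB, hA₂R]
    gcongr
    exact hug _ _ hd0 hd
  calc KΥ x y ≤ ENNReal.ofReal (A₂ / Υ (dist x y)) * (m (ball x (dist x y)))⁻¹ := by
        rw [← ofReal_div_mul_ofReal _ _ hΥd]; exact (hbΥ x y hxy).2
    _ ≤ ENNReal.ofReal (c * (B₁ / Ψ (dist x y))) * (m (ball x (dist x y)))⁻¹ := by gcongr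
    _ ≤ ENNReal.ofReal c * KΨ x y := by
        rw [ENNReal.ofReal_mul' (div_nonneg hB₁.le hΨd.le), mul_assoc,
          ← ofReal_div_mul_ofReal _ _ hΨd]
        gcongr
        exact (hbΨ x y hxy).1

/-- Summing over the dyadic annuli `2ᵏR ≤ d(x,y) < 2ᵏ⁺¹R`: (VD) bounds the mass of each annulus by
that of the inner ball, and the lower scaling of `Υ` makes the resulting series geometric. -/
lemma IsKernel.exists_tail_integral_le {m : Measure X} (hVD : VolumeDoubling m) {Υ : ℝ → ℝ}
    {CΥ β₁ β₂ : ℝ} (hΥ : IsDoubling Υ CΥ β₁ β₂) {K : X → X → ℝ≥0∞} (hK : IsKernel m Υ K) :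
    ∃ C : ℝ≥0∞, C ≠ ⊤ ∧ ∀ (x : X) (R : ℝ), 0 < R →
      ∫⁻ y in {y | R ≤ dist x y}, K x y ∂m ≤ C / ENNReal.ofReal (Υ R) := by
  obtain ⟨CVD, hCVD, hvd⟩ := hVD
  obtain ⟨C₁, C₂, hC₁, hC₁₂, hb⟩ := hK.bounds
  have hCΥ : 0 < CΥ := one_pos.trans hΥ.one_lt
  have hC₂ : 0 < C₂ := hC₁.trans_le hC₁₂
  set q : ℝ := ((2 : ℝ) ^ β₁)⁻¹
  have hq1 : ENNReal.ofReal q < 1 :=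
    ENNReal.ofReal_lt_one.2 (inv_lt_one_of_one_lt₀ (Real.one_lt_rpow one_lt_two hΥ.β₁_pos))
  refine ⟨ENNReal.ofReal (C₂ * CVD * CΥ) * (1 - ENNReal.ofReal q)⁻¹,
    ENNReal.mul_ne_top ofReal_ne_top (ENNReal.inv_ne_top.2 (tsub_pos_iff_lt.2 hq1).ne'),
    fun x R hR => ?_⟩
  have hΥR := hΥ.pos hR
  set A : ℕ → Set X := fun k => {y | 2 ^ k * R ≤ dist x y ∧ dist x y < 2 ^ (k + 1) * R}
  have hcover : {y | R ≤ dist x y} ⊆ ⋃ k, A k := by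
    intro y hy
    obtain ⟨k, hk⟩ := exists_nat_pow_near ((one_le_div hR).2 hy) one_lt_two
    exact mem_iUnion.2 ⟨k, by rwa [le_div_iff₀ hR, div_lt_iff₀ hR] at hk⟩
  have hannulus : ∀ k, ∫⁻ y in A k, K x y ∂m ≤
      ENNReal.ofReal (C₂ * CVD * CΥ / Υ R) * ENNReal.ofReal q ^ k := by
    intro k
    set r : ℝ := 2 ^ k * R
    have hr : 0 < r := by positivity
    have hΥr := hΥ.pos hr
    have hKle : ∀ y ∈ A k, K x y ≤ ENNReal.ofReal (C₂ / Υ r) * (m (ball x r))⁻¹ := by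
      rintro y ⟨hry, -⟩
      rw [← ofReal_div_mul_ofReal _ _ hΥr]
      refine (hb x y (dist_pos.1 (hr.trans_le hry))).2.trans (ENNReal.div_le_div_left ?_ _)
      gcongr
      exact hΥ.strictMonoOn.monotoneOn hr.le (hr.le.trans hry) hry
    have hA : m (A k) ≤ ENNReal.ofReal CVD * m (ball x r) := by
      refine (measure_mono fun y hy => ?_).trans (hvd x r hr)
      rw [mem_ball', show 2 * r = 2 ^ (k + 1) * R by ring]
      exact hy.2
    have hreal : C₂ / Υ r * CVD ≤ C₂ * CVD * CΥ / Υ R * q ^ k := by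
      have := mul_le_mul_of_nonneg_left (hΥ.inv_le_two_pow_mul hR k) (by positivity : 0 ≤ C₂ * CVD)
      calc C₂ / Υ r * CVD = C₂ * CVD * (Υ r)⁻¹ := by ring
        _ ≤ C₂ * CVD * (CΥ * q ^ k / Υ R) := this
        _ = C₂ * CVD * CΥ / Υ R * q ^ k := by ring
    calc ∫⁻ y in A k, K x y ∂m
        ≤ ∫⁻ _ in A k, ENNReal.ofReal (C₂ / Υ r) * (m (ball x r))⁻¹ ∂m :=
          setLIntegral_mono measurable_const hKle
      _ = ENNReal.ofReal (C₂ / Υ r) * (m (ball x r))⁻¹ * m (A k) := setLIntegral_const _ _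
      _ ≤ ENNReal.ofReal (C₂ / Υ r) * (m (ball x r))⁻¹ * (ENNReal.ofReal CVD * m (ball x r)) := by
          gcongr
      _ = ENNReal.ofReal (C₂ / Υ r) * ENNReal.ofReal CVD * ((m (ball x r))⁻¹ * m (ball x r)) := by
          ring
      _ ≤ ENNReal.ofReal (C₂ / Υ r) * ENNReal.ofReal CVD :=
          mul_le_of_le_one_right' (ENNReal.inv_mul_le_one _)
      _ ≤ ENNReal.ofReal (C₂ * CVD * CΥ / Υ R) * ENNReal.ofReal q ^ k := by
          rw [← ENNReal.ofReal_mul (by positivity), ← ENNReal.ofReal_pow (by positivity),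
            ← ENNReal.ofReal_mul (by positivity)]
          exact ENNReal.ofReal_le_ofReal hreal
  calc ∫⁻ y in {y | R ≤ dist x y}, K x y ∂m
      ≤ ∫⁻ y in ⋃ k, A k, K x y ∂m := lintegral_mono_set hcover
    _ ≤ ∑' k, ∫⁻ y in A k, K x y ∂m := lintegral_iUnion_le _ _
    _ ≤ ∑' k, ENNReal.ofReal (C₂ * CVD * CΥ / Υ R) * ENNReal.ofReal q ^ k :=
        ENNReal.tsum_le_tsum hannulus
    _ = ENNReal.ofReal (C₂ * CVD * CΥ) * (1 - ENNReal.ofReal q)⁻¹ / ENNReal.ofReal (Υ R) := by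
        rw [ENNReal.tsum_mul_left, ENNReal.tsum_geometric, ENNReal.ofReal_div_of_pos hΥR,
          div_eq_mul_inv, div_eq_mul_inv]
        ring

lemma ofReal_abs_sub_rpow_le {p : ℝ} (hp : 1 ≤ p) (a b : ℝ) :
    ENNReal.ofReal (|a - b| ^ p) ≤
      2 ^ (p - 1) * (ENNReal.ofReal (|a| ^ p) + ENNReal.ofReal (|b| ^ p)) := by
  simp only [← ENNReal.ofReal_rpow_of_nonneg (abs_nonneg _) (zero_le_one.trans hp)]
  calc ENNReal.ofReal |a - b| ^ p ≤ (ENNReal.ofReal |a| + ENNReal.ofReal |b|) ^ p := by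
        rw [← ENNReal.ofReal_add (abs_nonneg _) (abs_nonneg _)]
        gcongr
        exact abs_sub _ _
    _ ≤ _ := ENNReal.rpow_add_le_mul_rpow_add_rpow _ _ hp

lemma lintegral_lintegral_add {α β : Type*} [MeasurableSpace α] [MeasurableSpace β]
    {μ : Measure α} {ν : Measure β} [SFinite ν] {f : α → β → ℝ≥0∞}
    (hf : Measurable (Function.uncurry f)) (g : α → β → ℝ≥0∞) :
    ∫⁻ x, ∫⁻ y, (f x y + g x y) ∂ν ∂μ = ∫⁻ x, ∫⁻ y, f x y ∂ν ∂μ + ∫⁻ x, ∫⁻ y, g x y ∂ν ∂μ := by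
  simp_rw [lintegral_add_left hf.of_uncurry_left]
  exact lintegral_add_left hf.lintegral_prod_right _

section SecondCountable

variable [SecondCountableTopology X] [BorelSpace X]

lemma measurable_indicator_le_dist {K : X → X → ℝ≥0∞} (hK : Measurable (Function.uncurry K))
    (R : ℝ) : Measurable (Function.uncurry fun x y => {y | R ≤ dist x y}.indicator (K x) y) :=
  hK.indicator (s := {q : X × X | R ≤ dist q.1 q.2})
    (measurableSet_le measurable_const measurable_dist)

lemma lintegral_lintegral_far_le {m : Measure X} [SFinite m] {p : ℝ} (hp : 1 ≤ p)
    {K : X → X → ℝ≥0∞} (hKm : Measurable (Function.uncurry K)) (hKsymm : ∀ x y, K x y = K y x)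
    {R : ℝ} {T : ℝ≥0∞} (hT : ∀ x, ∫⁻ y in {y | R ≤ dist x y}, K x y ∂m ≤ T) {v : X → ℝ}
    (hv : Measurable v) :
    ∫⁻ x, ∫⁻ y, ENNReal.ofReal (|v x - v y| ^ p) * {y | R ≤ dist x y}.indicator (K x) y ∂m ∂m ≤
      2 ^ p * T * lpNormP m p v := by
  set G : X → X → ℝ≥0∞ := fun x y => {y | R ≤ dist x y}.indicator (K x) y
  set a : X → ℝ≥0∞ := fun x => ENNReal.ofReal (|v x| ^ p)
  have ha : Measurable a := by fun_prop
  have hG : Measurable (Function.uncurry G) := measurable_indicator_le_dist hKm R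
  have hGsymm : ∀ x y, G x y = G y x := by
    intro x y
    simp [G, indicator, dist_comm x y, hKsymm x y]
  have hhalf : ∫⁻ x, ∫⁻ y, a x * G x y ∂m ∂m ≤ T * lpNormP m p v := by
    calc ∫⁻ x, ∫⁻ y, a x * G x y ∂m ∂m = ∫⁻ x, a x * ∫⁻ y, G x y ∂m ∂m :=
          lintegral_congr fun x => lintegral_const_mul _ hG.of_uncurry_left
      _ ≤ ∫⁻ x, a x * T ∂m := by
          gcongr with x
          exact (lintegral_indicator (measurableSet_le measurable_const
            (measurable_const.dist measurable_id)) _).trans_le (hT x)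
      _ = T * lpNormP m p v := by rw [lintegral_mul_const _ ha, mul_comm]; rfl
  have hswap : ∫⁻ x, ∫⁻ y, a y * G x y ∂m ∂m = ∫⁻ x, ∫⁻ y, a x * G x y ∂m ∂m := by
    rw [lintegral_lintegral_swap ((ha.comp measurable_snd).mul hG).aemeasurable]
    simp_rw [hGsymm]
  calc ∫⁻ x, ∫⁻ y, ENNReal.ofReal (|v x - v y| ^ p) * G x y ∂m ∂m
      ≤ ∫⁻ x, ∫⁻ y, 2 ^ (p - 1) * (a x * G x y + a y * G x y) ∂m ∂m := by
        refine lintegral_mono fun x => lintegral_mono fun y => ?_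
        rw [← add_mul, ← mul_assoc]
        gcongr
        exact ofReal_abs_sub_rpow_le hp _ _
    _ = 2 ^ (p - 1) * (2 * ∫⁻ x, ∫⁻ y, a x * G x y ∂m ∂m) := by
        have h2 : (2 : ℝ≥0∞) ^ (p - 1) ≠ ⊤ := by finiteness
        rw [lintegral_congr fun x => lintegral_const_mul' _ _ h2, lintegral_const_mul' _ _ h2,
          lintegral_lintegral_add ((ha.comp measurable_fst).mul hG), hswap, two_mul]
    _ ≤ 2 ^ (p - 1) * (2 * (T * lpNormP m p v)) := by gcongr
    _ = 2 ^ p * T * lpNormP m p v := by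
        rw [← mul_assoc, ← mul_assoc]
        nth_rw 2 [← ENNReal.rpow_one 2]
        rw [← ENNReal.rpow_add _ _ two_ne_zero ofNat_ne_top, sub_add_cancel]

lemma energy_le_of_le_mul_of_tail_le {m : Measure X} [SFinite m] {p : ℝ} (hp : 1 ≤ p)
    {K K' : X → X → ℝ≥0∞} (hK'm : Measurable (Function.uncurry K'))
    (hK'symm : ∀ x y, K' x y = K' y x) {R : ℝ} {c T : ℝ≥0∞} (hc : c ≠ ⊤)
    (hnear : ∀ x y, x ≠ y → dist x y < R → K' x y ≤ c * K x y)
    (hT : ∀ x, ∫⁻ y in {y | R ≤ dist x y}, K' x y ∂m ≤ T) {v : X → ℝ} (hv : Measurable v) :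
    energy m K' p v ≤ c * energy m K p v + 2 ^ p * T * lpNormP m p v := by
  set F : X → X → ℝ≥0∞ := fun x y => ENNReal.ofReal (|v x - v y| ^ p)
  set G : X → X → ℝ≥0∞ := fun x y => {y | R ≤ dist x y}.indicator (K' x) y
  have hFG : Measurable (Function.uncurry fun x y => F x y * G x y) :=
    (by fun_prop : Measurable fun q : X × X => F q.1 q.2).mul (measurable_indicator_le_dist hK'm R)
  have hsplit : ∀ x y, F x y * K' x y ≤ c * (F x y * K x y) + F x y * G x y := by
    intro x y
    by_cases hxy : x = y
    · simp [F, hxy, Real.zero_rpow (by linarith : p ≠ 0)]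
    by_cases hd : R ≤ dist x y
    · exact le_add_left (by simp [G, hd])
    calc F x y * K' x y ≤ F x y * (c * K x y) := by gcongr; exact hnear x y hxy (not_le.1 hd)
      _ = c * (F x y * K x y) := by ring
      _ ≤ _ := le_self_add
  calc energy m K' p v ≤ ∫⁻ x, ∫⁻ y, (c * (F x y * K x y) + F x y * G x y) ∂m ∂m :=
        lintegral_mono fun x => lintegral_mono fun y => hsplit x y
    _ = c * energy m K p v + ∫⁻ x, ∫⁻ y, F x y * G x y ∂m ∂m := by
        simp_rw [lintegral_add_right _ hFG.of_uncurry_left]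
        rw [lintegral_add_right _ hFG.lintegral_prod_right,
          lintegral_congr fun x => lintegral_const_mul' _ _ hc, lintegral_const_mul' _ _ hc]
        rfl
    _ ≤ c * energy m K p v + 2 ^ p * T * lpNormP m p v := by
        gcongr
        exact lintegral_lintegral_far_le hp hK'm hK'symm hT hv

end SecondCountable

lemma energy_congr_ae {Y : Type*} [MeasurableSpace Y] {m : Measure Y} {K : Y → Y → ℝ≥0∞}
    {p : ℝ} {u v : Y → ℝ} (huv : u =ᵐ[m] v) : energy m K p u = energy m K p v := by
  refine lintegral_congr_ae ?_
  filter_upwards [huv] with x hx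
  refine lintegral_congr_ae ?_
  filter_upwards [huv] with y hy
  rw [hx, hy]

lemma lpNormP_lt_top_of_memLp {Y : Type*} [MeasurableSpace Y] {m : Measure Y} {p : ℝ}
    (hp : 0 < p) {u : Y → ℝ} (hu : MemLp u (ENNReal.ofReal p) m) : lpNormP m p u < ⊤ := by
  have h := lintegral_rpow_enorm_lt_top_of_eLpNorm_lt_top (by simpa using hp) ofReal_ne_top hu.2
  rw [ENNReal.toReal_ofReal hp.le] at h
  refine lt_of_eq_of_lt (lintegral_congr fun x => ?_) h
  rw [Real.enorm_eq_ofReal_abs, ENNReal.ofReal_rpow_of_nonneg (abs_nonneg _) hp.le]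

lemma GoodSpace.properSpace {m : Measure X} (hX : GoodSpace X m) : ProperSpace X :=
  .of_isCompact_closedBall_of_le 0 fun x r _ =>
    (hX.ballsRelCompact x (r + 1)).of_isClosed_subset isClosed_closedBall
      ((closedBall_subset_ball (lt_add_one r)).trans subset_closure)

lemma GoodSpace.isFiniteMeasureOnCompacts {m : Measure X} (hX : GoodSpace X m) :
    IsFiniteMeasureOnCompacts m :=
  ⟨hX.finiteOnCompacts⟩

theorem stmt_7_general {X : Type*} [MetricSpace X] [MeasurableSpace X] [BorelSpace X]
    (m : Measure X) (p : ℝ) (hp : 1 < p) (hX : GoodSpace X m)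
    (hVD : VolumeDoubling m)
    (Ψ Υ : ℝ → ℝ) (hΨ : DoublingFunction Ψ) (hΥ : DoublingFunction Υ) (hUG : UG Υ Ψ)
    (KΨ : X → X → ℝ≥0∞) (hKΨ : IsKernel m Ψ KΨ)
    (KΥ : X → X → ℝ≥0∞) (hKΥ : IsKernel m Υ KΥ) :
    domain m KΨ p ⊆ domain m KΥ p := by
  obtain ⟨_, _, _, hΨ⟩ := hΨ
  obtain ⟨_, _, _, hΥ⟩ := hΥ
  have := hX.properSpace
  have := hX.isFiniteMeasureOnCompacts
  obtain ⟨c, hc, hnear⟩ := IsKernel.exists_le_const_mul_of_dist_le hΨ hΥ hUG hKΨ hKΥ one_pos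
  obtain ⟨C, hC, htail⟩ := hKΥ.exists_tail_integral_le hVD hΥ
  rintro u ⟨hu, huE⟩
  refine ⟨hu, ?_⟩
  obtain ⟨v, hv, huv⟩ := hu.aestronglyMeasurable.aemeasurable
  have hvp : lpNormP m p v < ⊤ := lpNormP_lt_top_of_memLp (by linarith) (hu.ae_eq huv)
  rw [energy_congr_ae huv] at huE ⊢
  calc energy m KΥ p v
      ≤ c * energy m KΨ p v + 2 ^ p * (C / ENNReal.ofReal (Υ 1)) * lpNormP m p v :=
        energy_le_of_le_mul_of_tail_le hp.le hKΥ.meas hKΥ.symm hc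
          (fun x y hxy hd => hnear x y hxy hd.le) (fun x => htail x 1 one_pos) hv
    _ < ⊤ := by
        have : ENNReal.ofReal (Υ 1) ≠ 0 := (ENNReal.ofReal_pos.2 (hΥ.pos one_pos)).ne'
        finiteness

theorem stmt_7 {X : Type*} [MetricSpace X] [MeasurableSpace X] [BorelSpace X]
    (m : Measure X) (p : ℝ) (hp : 1 < p) (hX : GoodSpace X m)
    (hCC : ChainCondition X) (hVD : VolumeDoubling m)
    (Ψ Υ : ℝ → ℝ) (hΨ : DoublingFunction Ψ) (hΥ : DoublingFunction Υ) (hUG : UG Υ Ψ)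
    (KΨ : X → X → ℝ≥0∞) (hKΨ : IsKernel m Ψ KΨ)
    (KΥ : X → X → ℝ≥0∞) (hKΥ : IsKernel m Υ KΥ) :
    domain m KΨ p ⊆ domain m KΥ p :=
  stmt_7_general m p hp hX hVD Ψ Υ hΨ hΥ hUG KΨ hKΨ KΥ hKΥ

end NLP
end
end

section
/- Let Υ be a doubling function, K a kernel satisfying K^{(J)}(Υ), and suppose the associated non-local p-form (E^{(J)}, F^{(J)}) is a regular p-energy. Let Ω ⊆ X be a bounded open subset, let u ∈ F̂^{(J)} ∩ L^∞(X;m) and φ ∈ F^{(J)}(Ω) ∩ L^∞(X;m) both be non-negative on X, let λ > 0, and set u_λ = u + λ. Then φ^p / u_λ^{p−1} ∈ F^{(J)}(Ω), and E^{(J)}(u; φ^p / u_λ^{p−1}) ≤ C·E^{(J)}(φ), where C > 0 is a constant depending only on p. -/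
open MeasureTheory Metric Set ENNReal Filter Topology

noncomputable section

namespace NLP

variable {X : Type*} [MetricSpace X] [MeasurableSpace X]

open scoped NNReal

/-!
For `a, b > 0` and `s, t ≥ 0` one has the pointwise inequality
`|a - b| ^ (p - 2) * (a - b) * (s ^ p / a ^ (p - 1) - t ^ p / b ^ (p - 1)) ≤ |s - t| ^ p`:
for `b ≤ a` it is Radon's inequality `(x + y) ^ p / (b + c) ^ (p - 1) ≤ x ^ p / b ^ (p - 1) +
y ^ p / c ^ (p - 1)` (convexity of `r ↦ r ^ p`) applied to `s ≤ t + |s - t|` and `a = b + (a - b)`.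
With `a = u x + λ`, `b = u y + λ` and integration against `K`, this gives the estimate with `C = 1`.

For the membership, `φ ^ p / (u + λ) ^ (p - 1)` agrees a.e. with `Φ (φ x) (u x)`, where
`Φ s w = min (max s 0) M ^ p * (max w 0 + λ) ^ (1 - p)` and `M` bounds `φ`; the truncations make
`Φ` globally Lipschitz with `Φ 0 = 0`. Approximating `φ` in `F(Ω)` and `u` in `F̂` by continuous
compactly supported functions `φₙ`, `uₙ` (converging a.e. along a subsequence), `Φ φₙ uₙ` lies in
`F ∩ C_c(Ω)` and converges to `Φ φ u` in `E₁`. Since `E(w)` is the `p`-th power of the `Lᵖ` norm of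
`(x, y) ↦ w x - w y` for the measure `K dm dm`, this convergence is a dominated convergence argument
with the dominating functions `|Δφ| + |Δu| + |Δ(φ - φₙ)| + |Δ(u - uₙ)|`.
-/

lemma add_rpow_div_rpow_le {p x y b c : ℝ} (hp : 1 ≤ p) (hx : 0 ≤ x) (hy : 0 ≤ y)
    (hb : 0 < b) (hc : 0 < c) :
    (x + y) ^ p / (b + c) ^ (p - 1) ≤ x ^ p / b ^ (p - 1) + y ^ p / c ^ (p - 1) := by
  have hbc : 0 < b + c := by positivity
  have hconv := (convexOn_rpow hp).2 (mem_Ici.mpr (div_nonneg hx hb.le))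
    (mem_Ici.mpr (div_nonneg hy hc.le)) (div_pos hb hbc).le (div_pos hc hbc).le
    (by rw [← add_div, div_self hbc.ne'])
  have hmid : (b / (b + c)) • (x / b) + (c / (b + c)) • (y / c) = (x + y) / (b + c) := by
    simp only [smul_eq_mul]; field_simp
  have hscale : ∀ {z d : ℝ}, 0 ≤ z → 0 < d → (z / d) ^ p * d = z ^ p / d ^ (p - 1) := by
    intro z d hz hd
    rw [Real.div_rpow hz hd.le, Real.rpow_sub_one hd.ne']
    field_simp
  rw [hmid, smul_eq_mul, smul_eq_mul] at hconv
  calc (x + y) ^ p / (b + c) ^ (p - 1) = ((x + y) / (b + c)) ^ p * (b + c) :=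
        (hscale (by positivity) hbc).symm
    _ ≤ (b / (b + c) * (x / b) ^ p + c / (b + c) * (y / c) ^ p) * (b + c) := by gcongr
    _ = (x / b) ^ p * b + (y / c) ^ p * c := by field_simp
    _ = x ^ p / b ^ (p - 1) + y ^ p / c ^ (p - 1) := by rw [hscale hx hb, hscale hy hc]

lemma sub_rpow_mul_sub_div_rpow_le {p a b s t : ℝ} (hp : 1 < p) (hb : 0 < b) (hba : b ≤ a)
    (hs : 0 ≤ s) (ht : 0 ≤ t) :
    (a - b) ^ (p - 1) * (s ^ p / a ^ (p - 1) - t ^ p / b ^ (p - 1)) ≤ |s - t| ^ p := by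
  rcases hba.eq_or_lt with rfl | hlt
  · rw [sub_self, Real.zero_rpow (by linarith), zero_mul]
    positivity
  have hab : 0 < a - b := sub_pos.mpr hlt
  have hs_le : s ^ p / a ^ (p - 1) ≤ t ^ p / b ^ (p - 1) + |s - t| ^ p / (a - b) ^ (p - 1) :=
    calc s ^ p / a ^ (p - 1) ≤ (t + |s - t|) ^ p / (b + (a - b)) ^ (p - 1) := by
          rw [add_sub_cancel]
          exact div_le_div_of_nonneg_right
            (Real.rpow_le_rpow hs (by linarith [le_abs_self (s - t)]) (by linarith))
            (Real.rpow_nonneg (by linarith) _)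
      _ ≤ _ := add_rpow_div_rpow_le hp.le ht (abs_nonneg _) hb hab
  have hpos : 0 < (a - b) ^ (p - 1) := Real.rpow_pos_of_pos hab _
  calc (a - b) ^ (p - 1) * (s ^ p / a ^ (p - 1) - t ^ p / b ^ (p - 1))
      ≤ (a - b) ^ (p - 1) * (|s - t| ^ p / (a - b) ^ (p - 1)) :=
        mul_le_mul_of_nonneg_left (by linarith) hpos.le
    _ = |s - t| ^ p := by field_simp

lemma abs_sub_rpow_mul_sub_div_rpow_le {p a b s t : ℝ} (hp : 1 < p) (ha : 0 < a) (hb : 0 < b)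
    (hs : 0 ≤ s) (ht : 0 ≤ t) :
    |a - b| ^ (p - 2) * (a - b) * (s ^ p / a ^ (p - 1) - t ^ p / b ^ (p - 1)) ≤ |s - t| ^ p := by
  have hpow : ∀ {d : ℝ}, 0 ≤ d → |d| ^ (p - 2) * d = d ^ (p - 1) := by
    intro d hd
    rw [abs_of_nonneg hd]
    rcases hd.eq_or_lt with rfl | hd
    · rw [mul_zero, Real.zero_rpow (by linarith)]
    · rw [← Real.rpow_add_one hd.ne']; ring_nf
  rcases le_total b a with hba | hab
  · rw [hpow (sub_nonneg.mpr hba)]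
    exact sub_rpow_mul_sub_div_rpow_le hp hb hba hs ht
  · have h := sub_rpow_mul_sub_div_rpow_le hp ha hab ht hs
    rw [abs_sub_comm, ← hpow (sub_nonneg.mpr hab), abs_sub_comm] at h
    calc |a - b| ^ (p - 2) * (a - b) * (s ^ p / a ^ (p - 1) - t ^ p / b ^ (p - 1))
        = |a - b| ^ (p - 2) * (b - a) * (t ^ p / b ^ (p - 1) - s ^ p / a ^ (p - 1)) := by ring
      _ ≤ |s - t| ^ p := h

section Integral

variable {α β : Type*} [MeasurableSpace α] [MeasurableSpace β] {μ : Measure α} {ν : Measure β}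

lemma ofReal_integral_le_lintegral_ofReal (f : α → ℝ) :
    ENNReal.ofReal (∫ x, f x ∂μ) ≤ ∫⁻ x, ENNReal.ofReal (f x) ∂μ := by
  by_cases hf : Integrable f μ
  · rw [integral_eq_lintegral_pos_part_sub_lintegral_neg_part hf]
    exact (ENNReal.ofReal_le_ofReal (sub_le_self _ ENNReal.toReal_nonneg)).trans
      ENNReal.ofReal_toReal_le
  · simp [integral_undef hf]

lemma integral_integral_le_toReal_lintegral_lintegral {F : α → β → ℝ} {G : α → β → ℝ≥0∞}
    (hFG : ∀ x y, ENNReal.ofReal (F x y) ≤ G x y) (hG : ∫⁻ x, ∫⁻ y, G x y ∂ν ∂μ ≠ ⊤) :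
    ∫ x, ∫ y, F x y ∂ν ∂μ ≤ (∫⁻ x, ∫⁻ y, G x y ∂ν ∂μ).toReal := by
  rw [← ENNReal.ofReal_le_iff_le_toReal hG]
  refine (ofReal_integral_le_lintegral_ofReal _).trans (lintegral_mono fun x => ?_)
  exact (ofReal_integral_le_lintegral_ofReal _).trans (lintegral_mono (hFG x))

end Integral

theorem energyBilin_div_rpow_le {X : Type*} [MeasurableSpace X] {m : Measure X}
    {K : X → X → ℝ≥0∞} {p lam : ℝ} (hp : 1 < p) (hlam : 0 < lam) {u φ : X → ℝ}
    (hu : ∀ x, 0 ≤ u x) (hφ : ∀ x, 0 ≤ φ x) (hE : energy m K p φ ≠ ⊤) :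
    energyBilin m K p u (fun x => φ x ^ p / (u x + lam) ^ (p - 1)) ≤
      (energy m K p φ).toReal := by
  refine integral_integral_le_toReal_lintegral_lintegral (fun x y => ?_) hE
  have key := abs_sub_rpow_mul_sub_div_rpow_le hp (a := u x + lam) (b := u y + lam)
    (by linarith [hu x]) (by linarith [hu y]) (hφ x) (hφ y)
  rw [add_sub_add_right_eq_sub] at key
  calc _ ≤ ENNReal.ofReal (|φ x - φ y| ^ p * (K x y).toReal) :=
        ENNReal.ofReal_le_ofReal (mul_le_mul_of_nonneg_right key ENNReal.toReal_nonneg)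
    _ ≤ ENNReal.ofReal (|φ x - φ y| ^ p) * K x y := by
        rw [ENNReal.ofReal_mul (by positivity)]
        gcongr
        exact ENNReal.ofReal_toReal_le

lemma abs_sub_le_of_lipschitzWith {L : ℝ≥0} {Φ : ℝ → ℝ → ℝ}
    (hΦ : LipschitzWith L (Function.uncurry Φ)) (s s' w w' : ℝ) :
    |Φ s w - Φ s' w'| ≤ L * (|s - s'| + |w - w'|) := by
  have h := hΦ.dist_le_mul (s, w) (s', w')
  rw [Prod.dist_eq, Real.dist_eq, Real.dist_eq, Real.dist_eq] at h
  exact h.trans (mul_le_mul_of_nonneg_left (max_le_add_of_nonneg (abs_nonneg _) (abs_nonneg _))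
    L.2)

lemma abs_sub_sub_le_of_lipschitzWith {L : ℝ≥0} {Φ : ℝ → ℝ → ℝ}
    (hΦ : LipschitzWith L (Function.uncurry Φ)) (s₁ s₂ w₁ w₂ s₁' s₂' w₁' w₂' : ℝ) :
    |(Φ s₁ w₁ - Φ s₂ w₂) - (Φ s₁' w₁' - Φ s₂' w₂')| ≤
      2 * L * (|s₁ - s₂| + |w₁ - w₂|) +
        L * (|(s₁ - s₁') - (s₂ - s₂')| + |(w₁ - w₁') - (w₂ - w₂')|) := by
  have h₁ := abs_sub_le_of_lipschitzWith hΦ s₁ s₂ w₁ w₂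
  have h₂ := abs_sub_le_of_lipschitzWith hΦ s₁' s₂' w₁' w₂'
  have hs : |s₁' - s₂'| ≤ |s₁ - s₂| + |(s₁ - s₁') - (s₂ - s₂')| := by
    have h := abs_sub (s₁ - s₂) ((s₁ - s₁') - (s₂ - s₂'))
    rwa [show s₁ - s₂ - (s₁ - s₁' - (s₂ - s₂')) = s₁' - s₂' by ring] at h
  have hw : |w₁' - w₂'| ≤ |w₁ - w₂| + |(w₁ - w₁') - (w₂ - w₂')| := by
    have h := abs_sub (w₁ - w₂) ((w₁ - w₁') - (w₂ - w₂'))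
    rwa [show w₁ - w₂ - (w₁ - w₁' - (w₂ - w₂')) = w₁' - w₂' by ring] at h
  have h₂' := h₂.trans (mul_le_mul_of_nonneg_left (add_le_add hs hw) L.2)
  linarith [abs_sub (Φ s₁ w₁ - Φ s₂ w₂) (Φ s₁' w₁' - Φ s₂' w₂')]

lemma lipschitzWith_uncurry_mul {f g : ℝ → ℝ} {Lf Lg Cf Cg : ℝ≥0} (hf : LipschitzWith Lf f)
    (hg : LipschitzWith Lg g) (hfC : ∀ s, |f s| ≤ Cf) (hgC : ∀ w, |g w| ≤ Cg) :
    LipschitzWith (Cf * Lg + Cg * Lf) (Function.uncurry fun s w => f s * g w) := by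
  refine LipschitzWith.of_dist_le_mul fun z z' => ?_
  have hf' := hf.dist_le_mul z.1 z'.1
  have hg' := hg.dist_le_mul z.2 z'.2
  simp only [Function.uncurry, Real.dist_eq, Prod.dist_eq, NNReal.coe_add,
    NNReal.coe_mul] at hf' hg' ⊢
  calc |f z.1 * g z.2 - f z'.1 * g z'.2|
      = |f z.1 * (g z.2 - g z'.2) + g z'.2 * (f z.1 - f z'.1)| := by ring_nf
    _ ≤ |f z.1| * |g z.2 - g z'.2| + |g z'.2| * |f z.1 - f z'.1| := by
        rw [← abs_mul, ← abs_mul]; exact abs_add_le _ _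
    _ ≤ Cf * (Lg * |z.2 - z'.2|) + Cg * (Lf * |z.1 - z'.1|) := by
        gcongr
        exacts [hfC _, hgC _]
    _ ≤ Cf * (Lg * max |z.1 - z'.1| |z.2 - z'.2|) + Cg * (Lf * max |z.1 - z'.1| |z.2 - z'.2|) := by
        gcongr
        exacts [le_max_right _ _, le_max_left _ _]
    _ = (Cf * Lg + Cg * Lf) * max |z.1 - z'.1| |z.2 - z'.2| := by ring

section Truncations

variable {p M lam : ℝ}

def clampRpow (p M s : ℝ) : ℝ := min (max s 0) M ^ p

def shiftInvRpow (p lam w : ℝ) : ℝ := (max w 0 + lam) ^ (1 - p)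

lemma lipschitzWith_clampRpow (hp : 1 ≤ p) (hM : 0 ≤ M) :
    LipschitzWith (p * M ^ (p - 1)).toNNReal (clampRpow p M) := by
  have hpow : LipschitzOnWith (p * M ^ (p - 1)).toNNReal (fun t : ℝ => t ^ p) (Icc 0 M) := by
    refine (convex_Icc 0 M).lipschitzOnWith_of_nnnorm_hasDerivWithin_le
      (fun t _ => (Real.hasDerivAt_rpow_const (Or.inr hp)).hasDerivWithinAt) fun t ht => ?_
    rw [← NNReal.coe_le_coe, coe_nnnorm, Real.coe_toNNReal _ (by positivity),
      Real.norm_of_nonneg (by have := ht.1; positivity)]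
    exact mul_le_mul_of_nonneg_left (Real.rpow_le_rpow ht.1 ht.2 (by linarith)) (by linarith)
  have hclamp : LipschitzWith 1 fun s : ℝ => min (max s 0) M :=
    (LipschitzWith.id.max_const 0).min_const M
  have h := lipschitzOnWith_univ.mp (hpow.comp hclamp.lipschitzOnWith
    fun s _ => ⟨le_min (le_max_right _ _) hM, min_le_right _ _⟩)
  rw [mul_one] at h
  exact h

lemma lipschitzWith_shiftInvRpow (hp : 1 ≤ p) (hlam : 0 < lam) :
    LipschitzWith ((p - 1) * lam ^ (-p)).toNNReal (shiftInvRpow p lam) := by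
  have hpow : LipschitzOnWith ((p - 1) * lam ^ (-p)).toNNReal
      (fun t : ℝ => (t + lam) ^ (1 - p)) (Ici 0) := by
    refine (convex_Ici 0).lipschitzOnWith_of_nnnorm_hasDerivWithin_le
      (fun t ht => (((hasDerivAt_id' t).add_const lam).rpow_const
        (Or.inl (by have : (0 : ℝ) ≤ t := ht; positivity))).hasDerivWithinAt)
      fun t ht => ?_
    have ht' : (0 : ℝ) ≤ t := ht
    rw [← NNReal.coe_le_coe, coe_nnnorm, Real.coe_toNNReal _ (mul_nonneg (by linarith)
      (by positivity)), Real.norm_eq_abs, one_mul, show (1 : ℝ) - p - 1 = -p by ring, abs_mul,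
      abs_of_nonpos (by linarith : 1 - p ≤ 0), neg_sub, abs_of_nonneg (by positivity)]
    exact mul_le_mul_of_nonneg_left
      (Real.rpow_le_rpow_of_nonpos hlam (by linarith) (by linarith)) (by linarith)
  have h := lipschitzOnWith_univ.mp (hpow.comp (LipschitzWith.id.max_const 0).lipschitzOnWith
    fun w _ => (le_max_right w 0 : (0 : ℝ) ≤ max w 0))
  rw [mul_one] at h
  exact h

lemma abs_clampRpow_le (hp : 0 ≤ p) (hM : 0 ≤ M) (s : ℝ) :
    |clampRpow p M s| ≤ (M ^ p).toNNReal := by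
  have h0 : 0 ≤ min (max s 0) M := le_min (le_max_right _ _) hM
  rw [Real.coe_toNNReal _ (by positivity), clampRpow, abs_of_nonneg (by positivity)]
  exact Real.rpow_le_rpow h0 (min_le_right _ _) hp

lemma abs_shiftInvRpow_le (hp : 1 ≤ p) (hlam : 0 < lam) (w : ℝ) :
    |shiftInvRpow p lam w| ≤ (lam ^ (1 - p)).toNNReal := by
  have h0 : lam ≤ max w 0 + lam := by linarith [le_max_right w 0]
  rw [Real.coe_toNNReal _ (by positivity), shiftInvRpow, abs_of_nonneg (by positivity)]
  exact Real.rpow_le_rpow_of_nonpos hlam h0 (by linarith)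

lemma clampRpow_zero (hp : 0 < p) (hM : 0 ≤ M) : clampRpow p M 0 = 0 := by
  simp [clampRpow, hM, Real.zero_rpow hp.ne']

lemma clampRpow_mul_shiftInvRpow {s w : ℝ} (hs : 0 ≤ s) (hsM : s ≤ M) (hw : 0 ≤ w)
    (hlam : 0 < lam) : clampRpow p M s * shiftInvRpow p lam w = s ^ p / (w + lam) ^ (p - 1) := by
  rw [clampRpow, shiftInvRpow, max_eq_left hs, min_eq_left hsM, max_eq_left hw, div_eq_mul_inv,
    ← Real.rpow_neg (by positivity), neg_sub]

end Truncations

section Lp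

variable {α : Type*} [MeasurableSpace α] {μ : Measure α}

lemma lintegral_ofReal_abs_rpow_eq {p : ℝ} (hp : 0 < p) (f : α → ℝ) :
    ∫⁻ x, ENNReal.ofReal (|f x| ^ p) ∂μ = eLpNorm f (ENNReal.ofReal p) μ ^ p := by
  rw [eLpNorm_eq_eLpNorm' (by simpa using hp) ENNReal.ofReal_ne_top, ENNReal.toReal_ofReal hp.le,
    ← lintegral_rpow_enorm_eq_rpow_eLpNorm' hp]
  congr 1 with x
  rw [Real.enorm_eq_ofReal_abs, ENNReal.ofReal_rpow_of_nonneg (abs_nonneg _) hp.le]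

lemma tendsto_rpow_nhds_zero_iff {ι : Type*} {l : Filter ι} {x : ι → ℝ≥0∞} {p : ℝ}
    (hp : 0 < p) : Tendsto (fun i => x i ^ p) l (𝓝 0) ↔ Tendsto x l (𝓝 0) := by
  have hpow : ∀ {q : ℝ}, 0 < q → ∀ {y : ι → ℝ≥0∞}, Tendsto y l (𝓝 0) →
      Tendsto (fun i => y i ^ q) l (𝓝 0) := by
    intro q hq y hy
    simpa [Function.comp_def, ENNReal.zero_rpow_of_pos hq] using
      ((ENNReal.continuous_rpow_const (y := q)).tendsto 0).comp hy
  refine ⟨fun hx => ?_, hpow hp⟩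
  simpa [ENNReal.rpow_rpow_inv hp.ne'] using hpow (inv_pos.mpr hp) hx

lemma eLpNorm_le_mul_add_of_abs_le {f g h : α → ℝ} {q : ℝ≥0∞} (hq : 1 ≤ q) (c : ℝ≥0)
    (hg : AEStronglyMeasurable g μ) (hh : AEStronglyMeasurable h μ)
    (hle : ∀ᵐ x ∂μ, |f x| ≤ c * (|g x| + |h x|)) :
    eLpNorm f q μ ≤ c * (eLpNorm g q μ + eLpNorm h q μ) := by
  calc eLpNorm f q μ ≤ eLpNorm ((c : ℝ) • fun x => ‖g x‖ + ‖h x‖) q μ :=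
        eLpNorm_mono_ae_real (by simpa [Real.norm_eq_abs] using hle)
    _ = c * eLpNorm (fun x => ‖g x‖ + ‖h x‖) q μ := by
        rw [eLpNorm_const_smul, NNReal.enorm_eq]
    _ ≤ c * (eLpNorm g q μ + eLpNorm h q μ) := by
        gcongr
        exact (eLpNorm_add_le hg.norm hh.norm hq).trans_eq (by rw [eLpNorm_norm, eLpNorm_norm])

lemma tendsto_eLpNorm_zero_of_abs_le_mul_add {F g h : ℕ → α → ℝ} {q : ℝ≥0∞} (hq : 1 ≤ q)
    (c : ℝ≥0) (hg : ∀ n, AEStronglyMeasurable (g n) μ) (hh : ∀ n, AEStronglyMeasurable (h n) μ)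
    (hg_lim : Tendsto (fun n => eLpNorm (g n) q μ) atTop (𝓝 0))
    (hh_lim : Tendsto (fun n => eLpNorm (h n) q μ) atTop (𝓝 0))
    (hle : ∀ n, ∀ᵐ x ∂μ, |F n x| ≤ c * (|g n x| + |h n x|)) :
    Tendsto (fun n => eLpNorm (F n) q μ) atTop (𝓝 0) := by
  refine tendsto_of_tendsto_of_tendsto_of_le_of_le tendsto_const_nhds ?_ (fun _ => zero_le)
    fun n => eLpNorm_le_mul_add_of_abs_le hq c (hg n) (hh n) (hle n)
  simpa using ENNReal.Tendsto.const_mul (hg_lim.add hh_lim) (a := (c : ℝ≥0∞)) (Or.inr (by simp))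

/-- Split `|F n| ≤ min |F n| |G| + |H n|` and apply ordinary dominated convergence to the first
summand. -/
lemma tendsto_eLpNorm_zero_of_abs_le_add {F H : ℕ → α → ℝ} {G : α → ℝ} {p : ℝ} (hp : 1 ≤ p)
    (hF : ∀ n, AEStronglyMeasurable (F n) μ) (hG : MemLp G (ENNReal.ofReal p) μ)
    (hH : ∀ n, AEStronglyMeasurable (H n) μ)
    (hH_lim : Tendsto (fun n => eLpNorm (H n) (ENNReal.ofReal p) μ) atTop (𝓝 0))
    (hle : ∀ n, ∀ᵐ x ∂μ, |F n x| ≤ |G x| + |H n x|)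
    (hF_lim : ∀ᵐ x ∂μ, Tendsto (fun n => F n x) atTop (𝓝 0)) :
    Tendsto (fun n => eLpNorm (F n) (ENNReal.ofReal p) μ) atTop (𝓝 0) := by
  have hp0 : 0 < p := by linarith
  set D : ℕ → α → ℝ := fun n x => min |F n x| |G x| with hD
  have hD_meas : ∀ n, AEStronglyMeasurable (D n) μ := fun n =>
    (hF n).norm.inf hG.aestronglyMeasurable.norm
  have hD_lim : Tendsto (fun n => eLpNorm (D n) (ENNReal.ofReal p) μ) atTop (𝓝 0) := by
    rw [← tendsto_rpow_nhds_zero_iff hp0]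
    simp only [← lintegral_ofReal_abs_rpow_eq hp0]
    have hbound : ∫⁻ x, ENNReal.ofReal (|G x| ^ p) ∂μ ≠ ⊤ := by
      rw [lintegral_ofReal_abs_rpow_eq hp0]
      exact ENNReal.rpow_ne_top_of_nonneg hp0.le hG.eLpNorm_lt_top.ne
    have hcont : Continuous fun t : ℝ => ENNReal.ofReal (|t| ^ p) :=
      ENNReal.continuous_ofReal.comp (continuous_abs.rpow_const fun _ => Or.inr hp0.le)
    simpa [Real.zero_rpow hp0.ne'] using tendsto_lintegral_of_dominated_convergence' _
      (fun n => hcont.comp_aestronglyMeasurable (hD_meas n) |>.aemeasurable)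
      (fun n => ae_of_all _ fun x => ENNReal.ofReal_le_ofReal <| Real.rpow_le_rpow
        (abs_nonneg _) (by
          rw [abs_of_nonneg (le_min (abs_nonneg _) (abs_nonneg _))]; exact min_le_right _ _) hp0.le)
      hbound (hF_lim.mono fun x hx => (hcont.tendsto 0).comp <|
        squeeze_zero (fun n => le_min (abs_nonneg _) (abs_nonneg _)) (fun n => min_le_left _ _)
          (by simpa using hx.abs))
  have hsplit : ∀ n, eLpNorm (F n) (ENNReal.ofReal p) μ ≤
      eLpNorm (D n) (ENNReal.ofReal p) μ + eLpNorm (H n) (ENNReal.ofReal p) μ := by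
    refine fun n => (eLpNorm_le_mul_add_of_abs_le (ENNReal.one_le_ofReal.mpr hp) 1 (hD_meas n)
      (hH n) ?_).trans_eq (one_mul _)
    filter_upwards [hle n] with x hx
    rcases le_total |F n x| |G x| with h | h <;> simp [hD, h]; linarith [abs_nonneg (H n x)]
  refine tendsto_of_tendsto_of_tendsto_of_le_of_le tendsto_const_nhds ?_ (fun _ => zero_le) hsplit
  simpa using hD_lim.add hH_lim

end Lp

def increment {X : Type*} (w : X → ℝ) (z : X × X) : ℝ := w z.1 - w z.2

section Energy

variable {X : Type*} [MeasurableSpace X] {m : Measure X} {K : X → X → ℝ≥0∞} {p : ℝ}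

def jumpMeasure (m : Measure X) (K : X → X → ℝ≥0∞) : Measure (X × X) :=
  (m.prod m).withDensity (Function.uncurry K)

lemma energy_congr_ae_s12 {w w' : X → ℝ} (h : w =ᵐ[m] w') : energy m K p w = energy m K p w' := by
  refine lintegral_congr_ae ?_
  filter_upwards [h] with x hx
  refine lintegral_congr_ae ?_
  filter_upwards [h] with y hy
  rw [hx, hy]

lemma energy_add_const (w : X → ℝ) (a : ℝ) :
    energy m K p (fun x => w x + a) = energy m K p w := by
  simp only [energy, add_sub_add_right_eq_sub]

lemma energy1_congr_ae {w w' : X → ℝ} (h : w =ᵐ[m] w') :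
    energy1 m K p w = energy1 m K p w' := by
  rw [energy1, energy1, energy_congr_ae_s12 h, lpNormP, lpNormP]
  congr 1
  exact lintegral_congr_ae (h.mono fun x hx => by simp only [hx])

lemma aemeasurable_increment_prod [SFinite m] {w : X → ℝ} (hw : AEMeasurable w m) :
    AEMeasurable (increment w) (m.prod m) :=
  (hw.comp_quasiMeasurePreserving Measure.quasiMeasurePreserving_fst).sub
    (hw.comp_quasiMeasurePreserving Measure.quasiMeasurePreserving_snd)

lemma aemeasurable_increment [SFinite m] {w : X → ℝ} (hw : AEMeasurable w m) :
    AEMeasurable (increment w) (jumpMeasure m K) :=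
  (aemeasurable_increment_prod hw).mono_ac (withDensity_absolutelyContinuous _ _)

lemma ae_jumpMeasure_of_ae [SFinite m] {P : X → Prop} (h : ∀ᵐ x ∂m, P x) :
    ∀ᵐ z ∂(jumpMeasure m K), P z.1 ∧ P z.2 :=
  (withDensity_absolutelyContinuous _ _).ae_le
    ((Measure.quasiMeasurePreserving_fst.ae h).and (Measure.quasiMeasurePreserving_snd.ae h))

lemma energy_eq_eLpNorm_increment [SFinite m] (hK : Measurable (Function.uncurry K))
    (hp : 0 < p) {w : X → ℝ} (hw : AEMeasurable w m) :
    energy m K p w = eLpNorm (increment w) (ENNReal.ofReal p) (jumpMeasure m K) ^ p := by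
  have hmeas : AEMeasurable (fun z => ENNReal.ofReal (|increment w z| ^ p)) (m.prod m) :=
    (ENNReal.continuous_ofReal.comp (continuous_abs.rpow_const fun _ => Or.inr hp.le))
      |>.measurable.comp_aemeasurable (aemeasurable_increment_prod hw)
  rw [← lintegral_ofReal_abs_rpow_eq hp, jumpMeasure,
    lintegral_withDensity_eq_lintegral_mul₀ hK.aemeasurable hmeas,
    lintegral_prod _ (hK.aemeasurable.mul hmeas), energy]
  simp only [Pi.mul_apply, Function.uncurry_apply_pair, increment, mul_comm]

lemma lpNormP_eq_eLpNorm (hp : 0 < p) (w : X → ℝ) :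
    lpNormP m p w = eLpNorm w (ENNReal.ofReal p) m ^ p :=
  lintegral_ofReal_abs_rpow_eq hp w

lemma energy_lt_top_iff_memLp [SFinite m] (hK : Measurable (Function.uncurry K)) (hp : 0 < p)
    {w : X → ℝ} (hw : AEMeasurable w m) :
    energy m K p w < ⊤ ↔ MemLp (increment w) (ENNReal.ofReal p) (jumpMeasure m K) := by
  rw [energy_eq_eLpNorm_increment hK hp hw, ENNReal.rpow_lt_top_iff_of_pos hp]
  exact ⟨fun h => ⟨(aemeasurable_increment hw).aestronglyMeasurable, h⟩, fun h => h.2⟩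

lemma tendsto_energy1_nhds_zero_iff [SFinite m] (hK : Measurable (Function.uncurry K))
    (hp : 0 < p) {ws : ℕ → X → ℝ} (hws : ∀ n, AEMeasurable (ws n) m) :
    Tendsto (fun n => energy1 m K p (ws n)) atTop (𝓝 0) ↔
      Tendsto (fun n => eLpNorm (ws n) (ENNReal.ofReal p) m) atTop (𝓝 0) ∧
      Tendsto (fun n => eLpNorm (increment (ws n)) (ENNReal.ofReal p) (jumpMeasure m K))
        atTop (𝓝 0) := by
  simp only [energy1, energy_eq_eLpNorm_increment hK hp (hws _), lpNormP_eq_eLpNorm hp,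
    ← tendsto_rpow_nhds_zero_iff hp (x := fun n => eLpNorm _ _ _)]
  refine ⟨fun h => ⟨?_, ?_⟩, fun h => by simpa using h.2.add h.1⟩
  · exact tendsto_of_tendsto_of_tendsto_of_le_of_le tendsto_const_nhds h (fun _ => zero_le)
      fun _ => le_add_self
  · exact tendsto_of_tendsto_of_tendsto_of_le_of_le tendsto_const_nhds h (fun _ => zero_le)
      fun _ => le_self_add

end Energy

section LipschitzComp

variable {X : Type*} [MeasurableSpace X] {m : Measure X} [SFinite m]
  {K : X → X → ℝ≥0∞} {p : ℝ} {L : ℝ≥0} {Φ : ℝ → ℝ → ℝ}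

lemma comp_mem_domain (hK : Measurable (Function.uncurry K)) (hp : 1 ≤ p)
    (hΦ : LipschitzWith L (Function.uncurry Φ)) (hΦ0 : ∀ w, Φ 0 w = 0) {φ u : X → ℝ}
    (hφ : φ ∈ domain m K p) (hu : u ∈ domainHat m K p) :
    (fun x => Φ (φ x) (u x)) ∈ domain m K p := by
  obtain ⟨v, hv, a, rfl⟩ := hu
  have hp0 : 0 < p := by linarith
  have hφm := hφ.1.aestronglyMeasurable
  have hm : AEStronglyMeasurable (fun x => Φ (φ x) (v x + a)) m :=
    hΦ.continuous.comp_aestronglyMeasurable (hφm.prodMk (hv.1.aestronglyMeasurable.add_const a))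
  refine ⟨hφ.1.of_le_mul hm (c := L) (ae_of_all _ fun x => ?_), ?_⟩
  · simpa [hΦ0] using abs_sub_le_of_lipschitzWith hΦ (φ x) 0 (v x + a) (v x + a)
  rw [energy_lt_top_iff_memLp hK hp0 hm.aemeasurable]
  have hφi := (energy_lt_top_iff_memLp hK hp0 hφm.aemeasurable).1 hφ.2
  have hvi := (energy_lt_top_iff_memLp hK hp0 hv.1.aestronglyMeasurable.aemeasurable).1 hv.2
  refine ((hφi.abs.add hvi.abs).const_mul L).of_le
    (aemeasurable_increment hm.aemeasurable).aestronglyMeasurable (ae_of_all _ fun z => ?_)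
  have h := abs_sub_le_of_lipschitzWith hΦ (φ z.1) (φ z.2) (v z.1 + a) (v z.2 + a)
  rw [add_sub_add_right_eq_sub] at h
  exact h.trans (le_abs_self _)

lemma tendsto_energy1_comp_sub_comp (hK : Measurable (Function.uncurry K)) (hp : 1 ≤ p)
    (hΦ : LipschitzWith L (Function.uncurry Φ)) {φ u : X → ℝ} {φs us : ℕ → X → ℝ}
    (hφ : AEMeasurable φ m) (hu : AEMeasurable u m) (hφs : ∀ n, AEMeasurable (φs n) m)
    (hus : ∀ n, AEMeasurable (us n) m) (hφE : energy m K p φ < ⊤) (huE : energy m K p u < ⊤)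
    (hφs_lim : Tendsto (fun n => energy1 m K p (φ - φs n)) atTop (𝓝 0))
    (hus_lim : Tendsto (fun n => energy1 m K p (u - us n)) atTop (𝓝 0))
    (hφs_ae : ∀ᵐ x ∂m, Tendsto (fun n => φs n x) atTop (𝓝 (φ x)))
    (hus_ae : ∀ᵐ x ∂m, Tendsto (fun n => us n x) atTop (𝓝 (u x))) :
    Tendsto (fun n => energy1 m K p
      ((fun x => Φ (φ x) (u x)) - fun x => Φ (φs n x) (us n x))) atTop (𝓝 0) := by
  have hp0 : 0 < p := by linarith
  have hq : 1 ≤ ENNReal.ofReal p := ENNReal.one_le_ofReal.mpr hp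
  have hcomp : ∀ {f w : X → ℝ}, AEMeasurable f m → AEMeasurable w m →
      AEMeasurable (fun x => Φ (f x) (w x)) m := fun hf hw =>
    hΦ.continuous.measurable.comp_aemeasurable (hf.prodMk hw)
  have hdφ : ∀ n, AEMeasurable (φ - φs n) m := fun n => hφ.sub (hφs n)
  have hdu : ∀ n, AEMeasurable (u - us n) m := fun n => hu.sub (hus n)
  have hg : ∀ n, AEMeasurable ((fun x => Φ (φ x) (u x)) - fun x => Φ (φs n x) (us n x)) m :=
    fun n => (hcomp hφ hu).sub (hcomp (hφs n) (hus n))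
  rw [tendsto_energy1_nhds_zero_iff hK hp0 hg]
  rw [tendsto_energy1_nhds_zero_iff hK hp0 hdφ] at hφs_lim
  rw [tendsto_energy1_nhds_zero_iff hK hp0 hdu] at hus_lim
  have hdφ' : ∀ n, AEStronglyMeasurable (increment (φ - φs n)) (jumpMeasure m K) :=
    fun n => (aemeasurable_increment (hdφ n)).aestronglyMeasurable
  have hdu' : ∀ n, AEStronglyMeasurable (increment (u - us n)) (jumpMeasure m K) :=
    fun n => (aemeasurable_increment (hdu n)).aestronglyMeasurable
  refine ⟨tendsto_eLpNorm_zero_of_abs_le_mul_add hq L (fun n => (hdφ n).aestronglyMeasurable)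
    (fun n => (hdu n).aestronglyMeasurable) hφs_lim.1 hus_lim.1
    fun n => ae_of_all _ fun x => abs_sub_le_of_lipschitzWith hΦ _ _ _ _, ?_⟩
  have hg_ae : ∀ᵐ x ∂m, Tendsto (fun n => Φ (φ x) (u x) - Φ (φs n x) (us n x)) atTop (𝓝 0) := by
    filter_upwards [hφs_ae, hus_ae] with x hφx hux
    refine squeeze_zero_norm (fun n => abs_sub_le_of_lipschitzWith hΦ _ _ _ _) ?_
    simpa using (((tendsto_const_nhds (x := φ x)).sub hφx).abs.add
      ((tendsto_const_nhds (x := u x)).sub hux).abs).const_mul (L : ℝ)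
  have hφi := (energy_lt_top_iff_memLp hK hp0 hφ).1 hφE
  have hui := (energy_lt_top_iff_memLp hK hp0 hu).1 huE
  refine tendsto_eLpNorm_zero_of_abs_le_add hp
    (fun n => (aemeasurable_increment (hg n)).aestronglyMeasurable)
    (G := fun z => 2 * L * (|increment φ z| + |increment u z|))
    (H := fun n z => L * (|increment (φ - φs n) z| + |increment (u - us n) z|))
    (by simpa [mul_assoc] using (hφi.abs.add hui.abs).const_mul (2 * L : ℝ))
    (fun n => ((aemeasurable_increment (hdφ n)).abs.add
      (aemeasurable_increment (hdu n)).abs).const_mul _ |>.aestronglyMeasurable)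
    (tendsto_eLpNorm_zero_of_abs_le_mul_add hq L hdφ' hdu' hφs_lim.2 hus_lim.2
      fun n => ae_of_all _ fun z => (abs_of_nonneg (by positivity)).le)
    (fun n => ae_of_all _ fun z => ?_) ?_
  · simp only [increment, Pi.sub_apply]
    rw [sub_sub_sub_comm]
    exact (abs_sub_sub_le_of_lipschitzWith hΦ (φ z.1) (φ z.2) (u z.1) (u z.2) (φs n z.1)
      (φs n z.2) (us n z.1) (us n z.2)).trans (add_le_add (le_abs_self _) (le_abs_self _))
  · filter_upwards [ae_jumpMeasure_of_ae hg_ae] with z hz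
    simpa [increment] using hz.1.sub hz.2

end LipschitzComp

section Domain

variable {X : Type*} [MetricSpace X] [MeasurableSpace X] {m : Measure X}
  {K : X → X → ℝ≥0∞} {p : ℝ} {Ω : Set X}

lemma mem_domainOn_of_ae_eq {w w' : X → ℝ} (h : w =ᵐ[m] w') (hw : w ∈ domainOn m K p Ω) :
    w' ∈ domainOn m K p Ω := by
  refine ⟨⟨(memLp_congr_ae h).1 hw.1.1, (energy_congr_ae_s12 h).symm.trans_lt hw.1.2⟩,
    fun ε hε => ?_⟩
  obtain ⟨f, hf, hf_cont, hf_supp, hf_sub, hf_lt⟩ := hw.2 ε hε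
  refine ⟨f, hf, hf_cont, hf_supp, hf_sub, ?_⟩
  rwa [← energy1_congr_ae (h.sub (EventuallyEq.refl _ f))]

lemma mem_domainOn_univ (hE : IsRegularEnergy m K p) {v : X → ℝ} (hv : v ∈ domain m K p) :
    v ∈ domainOn m K p univ := by
  refine ⟨hv, fun ε hε => ?_⟩
  obtain ⟨f, hf, hf_cont, hf_supp, hf_lt⟩ := hE.regEnergy v hv ε hε
  exact ⟨f, hf, hf_cont, hf_supp, subset_univ _, hf_lt⟩

lemma exists_seq_of_mem_domainOn (hp : 0 < p) {w : X → ℝ} (hw : w ∈ domainOn m K p Ω) :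
    ∃ ws : ℕ → X → ℝ,
      (∀ n, ws n ∈ domain m K p ∧ Continuous (ws n) ∧ HasCompactSupport (ws n) ∧
        tsupport (ws n) ⊆ Ω) ∧
      Tendsto (fun n => energy1 m K p (w - ws n)) atTop (𝓝 0) ∧
      ∀ᵐ x ∂m, Tendsto (fun n => ws n x) atTop (𝓝 (w x)) := by
  choose fs hfs hfs_cont hfs_supp hfs_sub hfs_lt using
    fun n : ℕ => hw.2 (1 / (n + 1)) Nat.one_div_pos_of_nat
  have hE1 : Tendsto (fun n => energy1 m K p (w - fs n)) atTop (𝓝 0) := by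
    refine tendsto_of_tendsto_of_tendsto_of_le_of_le tendsto_const_nhds ?_ (fun _ => zero_le)
      fun n => (hfs_lt n).le
    simpa using ENNReal.tendsto_ofReal tendsto_one_div_add_atTop_nhds_zero_nat
  have hLp : Tendsto (fun n => eLpNorm (fs n - w) (ENNReal.ofReal p) m) atTop (𝓝 0) := by
    simp only [eLpNorm_sub_comm _ w, ← tendsto_rpow_nhds_zero_iff hp (x := fun n => eLpNorm _ _ _),
      ← lpNormP_eq_eLpNorm hp]
    exact tendsto_of_tendsto_of_tendsto_of_le_of_le tendsto_const_nhds hE1 (fun _ => zero_le)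
      fun _ => le_add_self
  obtain ⟨ns, hns, hae⟩ := (tendstoInMeasure_of_tendsto_eLpNorm (by simpa using hp)
    (fun n => (hfs n).1.aestronglyMeasurable) hw.1.1.aestronglyMeasurable hLp).exists_seq_tendsto_ae
  exact ⟨fun k => fs (ns k), fun k => ⟨hfs _, hfs_cont _, hfs_supp _, hfs_sub _⟩,
    hE1.comp hns.tendsto_atTop, hae⟩

theorem comp_mem_domainOn [SFinite m] {L : ℝ≥0} {Φ : ℝ → ℝ → ℝ}
    (hE : IsRegularEnergy m K p) (hK : Measurable (Function.uncurry K)) (hp : 1 ≤ p)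
    (hΦ : LipschitzWith L (Function.uncurry Φ)) (hΦ0 : ∀ w, Φ 0 w = 0) {φ u : X → ℝ}
    (hφ : φ ∈ domainOn m K p Ω) (hu : u ∈ domainHat m K p) :
    (fun x => Φ (φ x) (u x)) ∈ domainOn m K p Ω := by
  refine ⟨comp_mem_domain hK hp hΦ hΦ0 hφ.1 hu, fun ε hε => ?_⟩
  obtain ⟨v, hv, a, rfl⟩ := hu
  have hp0 : 0 < p := by linarith
  obtain ⟨φs, hφs, hφs_lim, hφs_ae⟩ := exists_seq_of_mem_domainOn hp0 hφ
  obtain ⟨vs, hvs, hvs_lim, hvs_ae⟩ := exists_seq_of_mem_domainOn hp0 (mem_domainOn_univ hE hv)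
  have hmeas : ∀ {w : X → ℝ}, w ∈ domain m K p → AEMeasurable w m :=
    fun hw => hw.1.aestronglyMeasurable.aemeasurable
  have hlim := tendsto_energy1_comp_sub_comp hK hp hΦ (hmeas hφ.1) ((hmeas hv).add_const a)
    (fun n => hmeas (hφs n).1) (fun n => (hmeas (hvs n).1).add_const a) hφ.1.2
    ((energy_add_const v a).trans_lt hv.2) hφs_lim
    (by simpa [Pi.sub_def, add_sub_add_right_eq_sub] using hvs_lim)
    hφs_ae (hvs_ae.mono fun x hx => hx.add_const a)
  obtain ⟨n, hn⟩ := (hlim.eventually (gt_mem_nhds (ENNReal.ofReal_pos.2 hε))).exists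
  have hsupp : Function.support (fun x => Φ (φs n x) (vs n x + a)) ⊆ Function.support (φs n) :=
    fun x hx h0 => hx (by simp only [h0, hΦ0])
  exact ⟨_, comp_mem_domain hK hp hΦ hΦ0 (hφs n).1 ⟨vs n, (hvs n).1, a, rfl⟩,
    hΦ.continuous.comp ((hφs n).2.1.prodMk ((hvs n).2.1.add continuous_const)),
    (hφs n).2.2.1.mono' (hsupp.trans (subset_tsupport _)),
    (closure_mono hsupp).trans (hφs n).2.2.2, hn⟩

end Domain

lemma GoodSpace.sigmaFinite {X : Type*} [MetricSpace X] [MeasurableSpace X] {m : Measure X}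
    (hG : GoodSpace X m) : SigmaFinite m := by
  have : ProperSpace X := ⟨fun x r => (hG.ballsRelCompact x (r + 1)).of_isClosed_subset
    isClosed_closedBall ((closedBall_subset_ball (lt_add_one r)).trans subset_closure)⟩
  have : IsFiniteMeasureOnCompacts m := ⟨fun S hS => hG.finiteOnCompacts S hS⟩
  infer_instance

theorem stmt_12 (p : ℝ) (hp : 1 < p) :
    ∃ C : ℝ, 0 < C ∧
      ∀ (X : Type) [MetricSpace X] [MeasurableSpace X] [BorelSpace X],
        ∀ (m : Measure X) (Υ : ℝ → ℝ) (K : X → X → ℝ≥0∞),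
          GoodSpace X m → DoublingFunction Υ → IsKernel m Υ K → IsRegularEnergy m K p →
          ∀ Ω : Set X, IsOpen Ω → Bornology.IsBounded Ω →
          ∀ u : X → ℝ, u ∈ domainHat m K p → BddAe m u → (∀ x, 0 ≤ u x) →
          ∀ φ : X → ℝ, φ ∈ domainOn m K p Ω → BddAe m φ → (∀ x, 0 ≤ φ x) →
          ∀ lam : ℝ, 0 < lam →
            (fun x => φ x ^ p / (u x + lam) ^ (p - 1)) ∈ domainOn m K p Ω ∧
            energyBilin m K p u (fun x => φ x ^ p / (u x + lam) ^ (p - 1)) ≤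
              C * (energy m K p φ).toReal := by
  refine ⟨1, one_pos, fun X _ _ _ m Υ K hG _ hK hE Ω _ _ u hu _ hu0 φ hφ hφM hφ0 lam hlam => ?_⟩
  have := hG.sigmaFinite
  obtain ⟨M, hM⟩ := hφM
  have hM0 : 0 ≤ max M 0 := le_max_right _ _
  have hΦ := lipschitzWith_uncurry_mul (lipschitzWith_clampRpow hp.le hM0)
    (lipschitzWith_shiftInvRpow hp.le hlam) (abs_clampRpow_le (by linarith) hM0)
    (abs_shiftInvRpow_le hp.le hlam)
  refine ⟨mem_domainOn_of_ae_eq ?_ (comp_mem_domainOn hE hK.meas hp.le hΦ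
    (fun w => by simp [clampRpow_zero (by linarith : 0 < p) hM0]) hφ hu), ?_⟩
  · filter_upwards [hM] with x hx
    exact clampRpow_mul_shiftInvRpow (hφ0 x)
      (((le_abs_self _).trans hx).trans (le_max_left _ _)) (hu0 x) hlam
  · rw [one_mul]
    exact energyBilin_div_rpow_le hp hlam hu0 hφ0 hφ.1.2.ne

end NLP
end
end

section
/- Let p ∈ (1,∞) and let f ∈ C²(ℝ) satisfy 0 ≤ f′ ≤ 1 and f″ ≤ 0 on ℝ. Then for all X, Y ∈ ℝ and all a, b ≥ 0: |f(X) − f(Y)|^{p−2}(f(X) − f(Y))(a − b) ≥ |X − Y|^{p−2}(X − Y)(f′(X)^{p−1}·a − f′(Y)^{p−1}·b). -/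
open MeasureTheory Metric Set ENNReal Filter Topology

noncomputable section

/-
Put `φ(t) = |t|^(p-2) t`, which is `t ↦ t^(p-1)` on `t ≥ 0`, hence monotone there. The expression
is invariant under swapping `(X, a)` with `(Y, b)`, so take `Y ≤ X`. Concavity of `f` bounds the
secant slope by the tangent slopes at both ends, `f'(X)(X-Y) ≤ f(X) - f(Y) ≤ f'(Y)(X-Y)`, and
since `φ(X-Y) f'^(p-1) = φ(f'(X-Y))` for `f' ≥ 0`, the claim becomes
`φ(f'(X)(X-Y)) a - φ(f'(Y)(X-Y)) b ≤ φ(f(X) - f(Y)) (a - b)`, which follows from monotonicity of `φ`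
and `a, b ≥ 0`.
-/

lemma abs_rpow_sub_two_mul_self_of_nonneg {p t : ℝ} (hp : p ≠ 1) (ht : 0 ≤ t) :
    |t| ^ (p - 2) * t = t ^ (p - 1) := by
  rcases ht.eq_or_lt with rfl | ht
  · simp [Real.zero_rpow (sub_ne_zero.mpr hp)]
  · rw [abs_of_pos ht, show p - 1 = p - 2 + 1 by ring, Real.rpow_add_one ht.ne']

section Concave

variable {f : ℝ → ℝ}

lemma ConcaveOn.deriv_mul_sub_le_sub (hconc : ConcaveOn ℝ univ f) (hdf : Differentiable ℝ f)
    {x y : ℝ} (hyx : y ≤ x) :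
    deriv f x * (x - y) ≤ f x - f y := by
  rcases hyx.eq_or_lt with rfl | hlt
  · simp
  have h := hconc.deriv_le_slope (mem_univ y) (mem_univ x) hlt (hdf x)
  rwa [slope_def_field, le_div_iff₀ (sub_pos.mpr hlt)] at h

lemma ConcaveOn.sub_le_deriv_mul_sub (hconc : ConcaveOn ℝ univ f) (hdf : Differentiable ℝ f)
    {x y : ℝ} (hyx : y ≤ x) :
    f x - f y ≤ deriv f y * (x - y) := by
  rcases hyx.eq_or_lt with rfl | hlt
  · simp
  have h := hconc.slope_le_deriv (mem_univ y) (mem_univ x) hlt (hdf y)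
  rwa [slope_def_field, div_le_iff₀ (sub_pos.mpr hlt)] at h

lemma ConcaveOn.signed_rpow_chain_ineq_of_le {p : ℝ} (hp : 1 < p) (hconc : ConcaveOn ℝ univ f)
    (hdf : Differentiable ℝ f) (hf0 : ∀ t, 0 ≤ deriv f t) {x y a b : ℝ} (ha : 0 ≤ a)
    (hb : 0 ≤ b) (hyx : y ≤ x) :
    |x - y| ^ (p - 2) * (x - y) * (deriv f x ^ (p - 1) * a - deriv f y ^ (p - 1) * b) ≤
      |f x - f y| ^ (p - 2) * (f x - f y) * (a - b) := by
  have hd : 0 ≤ x - y := sub_nonneg.mpr hyx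
  have hlow := hconc.deriv_mul_sub_le_sub hdf hyx
  have hhigh := hconc.sub_le_deriv_mul_sub hdf hyx
  have hD : 0 ≤ f x - f y := (mul_nonneg (hf0 x) hd).trans hlow
  have hp1 : 0 ≤ p - 1 := by linarith
  have hx : deriv f x ^ (p - 1) * (x - y) ^ (p - 1) ≤ (f x - f y) ^ (p - 1) := by
    rw [← Real.mul_rpow (hf0 x) hd]
    exact Real.rpow_le_rpow (mul_nonneg (hf0 x) hd) hlow hp1
  have hy : (f x - f y) ^ (p - 1) ≤ deriv f y ^ (p - 1) * (x - y) ^ (p - 1) := by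
    rw [← Real.mul_rpow (hf0 y) hd]
    exact Real.rpow_le_rpow hD hhigh hp1
  rw [abs_rpow_sub_two_mul_self_of_nonneg hp.ne' hd,
    abs_rpow_sub_two_mul_self_of_nonneg hp.ne' hD]
  nlinarith [mul_le_mul_of_nonneg_right hx ha, mul_le_mul_of_nonneg_right hy hb]

end Concave

namespace NLP

theorem stmt_16_general (p : ℝ) (hp : 1 < p) (f : ℝ → ℝ) (hf : ContDiff ℝ 2 f)
    (hf0 : ∀ t : ℝ, 0 ≤ deriv f t)
    (hf2 : ∀ t : ℝ, deriv (deriv f) t ≤ 0) :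
    ∀ x y a b : ℝ, 0 ≤ a → 0 ≤ b →
      |x - y| ^ (p - 2) * (x - y) * (deriv f x ^ (p - 1) * a - deriv f y ^ (p - 1) * b) ≤
        |f x - f y| ^ (p - 2) * (f x - f y) * (a - b) := by
  have hdf : Differentiable ℝ f := hf.differentiable two_ne_zero
  have hconc : ConcaveOn ℝ univ f :=
    concaveOn_univ_of_deriv2_nonpos hdf hf.differentiable_deriv_two hf2
  intro x y a b ha hb
  wlog hyx : y ≤ x generalizing x y a b
  · convert this y x b a hb ha (le_of_not_ge hyx) using 1 <;>
      simp only [abs_sub_comm y x, abs_sub_comm (f y) (f x)] <;> ring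
  exact hconc.signed_rpow_chain_ineq_of_le hp hdf hf0 ha hb hyx

theorem stmt_16 (p : ℝ) (hp : 1 < p) (f : ℝ → ℝ) (hf : ContDiff ℝ 2 f)
    (hf0 : ∀ t : ℝ, 0 ≤ deriv f t) (hf1 : ∀ t : ℝ, deriv f t ≤ 1)
    (hf2 : ∀ t : ℝ, deriv (deriv f) t ≤ 0) :
    ∀ x y a b : ℝ, 0 ≤ a → 0 ≤ b →
      |x - y| ^ (p - 2) * (x - y) * (deriv f x ^ (p - 1) * a - deriv f y ^ (p - 1) * b) ≤
        |f x - f y| ^ (p - 2) * (f x - f y) * (a - b) :=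
  stmt_16_general p hp f hf hf0 hf2

end NLP
end
end

section
/- Let p ∈ (1,∞). There exists C > 0 depending only on p such that for all x, y ∈ ℝ and all a, b ≥ 0: |x−y|^{p−2}(x−y)·(a^p·x − b^p·y) ≥ (1/4)·|x−y|^p·(a^p + b^p) − C·(|x|^p + |y|^p)·|a−b|^p. -/
open MeasureTheory Metric Set ENNReal Filter Topology

noncomputable section

namespace NLP

variable {X : Type*} [MetricSpace X] [MeasurableSpace X]

/-! With `s = |x - y| ^ (p - 2) * (x - y)`, so that `s * (x - y) = |x - y| ^ p` and
`|s| = |x - y| ^ (p - 1)`, one has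
`s * (a^p x - b^p y) = (a^p + b^p)/2 * |x - y|^p + (a^p - b^p)/2 * s * (x + y)`.
By convexity of `t ↦ t ^ p`, `|a^p - b^p| ≤ p (a^(p-1) + b^(p-1)) |a - b|`, so the cross term is
at most `|x - y|^(p-1) (a^(p-1) + b^(p-1)) * (p/2) |a - b| (|x| + |y|)`; Young's inequality splits
this into `1/4 (a^p + b^p) |x - y|^p` plus a multiple of `(|x|^p + |y|^p) |a - b|^p`. -/

section Inequalities

variable {p : ℝ}

lemma rpow_sub_one_mul_self {u : ℝ} (hu : 0 ≤ u) (hp : p ≠ 0) : u ^ (p - 1) * u = u ^ p := by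
  conv_rhs => rw [show p = (p - 1) + 1 by ring, Real.rpow_add' hu (by simpa using hp),
    Real.rpow_one]

lemma abs_rpow_sub_two_mul_self (t : ℝ) (hp : p ≠ 0) : |t| ^ (p - 2) * t * t = |t| ^ p := by
  rcases eq_or_ne t 0 with rfl | ht
  · simp [Real.zero_rpow hp]
  · rw [mul_assoc, ← abs_mul_abs_self, ← mul_assoc, ← Real.rpow_add_one (abs_ne_zero.2 ht),
      ← Real.rpow_add_one (abs_ne_zero.2 ht)]
    ring_nf

lemma abs_abs_rpow_sub_two_mul (t : ℝ) (hp : p ≠ 1) : |(|t| ^ (p - 2) * t)| = |t| ^ (p - 1) := by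
  rcases eq_or_ne t 0 with rfl | ht
  · simp [Real.zero_rpow (sub_ne_zero.2 hp)]
  · rw [abs_mul, abs_of_nonneg (Real.rpow_nonneg (abs_nonneg t) _),
      ← Real.rpow_add_one (abs_ne_zero.2 ht)]
    ring_nf

lemma rpow_add_mul_sub_le_rpow (hp : 1 < p) {a b : ℝ} (ha : 0 ≤ a) (hb : 0 ≤ b) :
    a ^ p + p * a ^ (p - 1) * (b - a) ≤ b ^ p := by
  rcases ha.eq_or_lt with rfl | ha
  · simp [Real.zero_rpow (by linarith : p ≠ 0), Real.zero_rpow (by linarith : p - 1 ≠ 0),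
      Real.rpow_nonneg hb]
  have bernoulli := one_add_mul_self_le_rpow_one_add
    (by linarith [div_nonneg hb ha.le] : (-1 : ℝ) ≤ b / a - 1) hp.le
  rw [add_sub_cancel, Real.div_rpow hb ha.le, le_div_iff₀ (Real.rpow_pos_of_pos ha p)] at bernoulli
  have hpow := rpow_sub_one_mul_self ha.le (by linarith : p ≠ 0)
  calc a ^ p + p * a ^ (p - 1) * (b - a) = (1 + p * (b / a - 1)) * a ^ p := by
        rw [← hpow]; field_simp
    _ ≤ b ^ p := bernoulli

lemma abs_rpow_sub_rpow_le (hp : 1 < p) {a b : ℝ} (ha : 0 ≤ a) (hb : 0 ≤ b) :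
    |a ^ p - b ^ p| ≤ p * (a ^ (p - 1) + b ^ (p - 1)) * |a - b| := by
  have hab := rpow_add_mul_sub_le_rpow hp ha hb
  have hba := rpow_add_mul_sub_le_rpow hp hb ha
  have h₁ : p * a ^ (p - 1) * (a - b) ≤ p * a ^ (p - 1) * |a - b| :=
    mul_le_mul_of_nonneg_left (le_abs_self _) (by positivity)
  have h₂ : p * b ^ (p - 1) * (b - a) ≤ p * b ^ (p - 1) * |a - b| :=
    mul_le_mul_of_nonneg_left (neg_sub a b ▸ neg_le_abs _) (by positivity)
  have h₃ : 0 ≤ p * a ^ (p - 1) * |a - b| := by positivity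
  have h₄ : 0 ≤ p * b ^ (p - 1) * |a - b| := by positivity
  rw [abs_le]
  constructor <;> linarith

/-- Young's inequality for the conjugate exponents `p / (p - 1)` and `p`, with weight `K`. -/
lemma rpow_sub_one_mul_le (hp : 1 ≤ p) {K u v : ℝ} (hK : 0 < K) (hu : 0 ≤ u) (hv : 0 ≤ v) :
    u ^ (p - 1) * v ≤ u ^ p / K + K ^ (p - 1) * v ^ p := by
  have hp0 : p ≠ 0 := by linarith
  rcases le_or_gt (K * v) u with h | h
  · calc u ^ (p - 1) * v ≤ u ^ (p - 1) * (u / K) :=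
          mul_le_mul_of_nonneg_left ((le_div_iff₀' hK).2 h) (by positivity)
      _ = u ^ p / K := by rw [← rpow_sub_one_mul_self hu hp0, mul_div_assoc]
      _ ≤ u ^ p / K + K ^ (p - 1) * v ^ p := le_add_of_nonneg_right (by positivity)
  · calc u ^ (p - 1) * v ≤ (K * v) ^ (p - 1) * v :=
          mul_le_mul_of_nonneg_right (Real.rpow_le_rpow hu h.le (by linarith)) hv
      _ = K ^ (p - 1) * v ^ p := by
          rw [Real.mul_rpow hK.le hv, mul_assoc, rpow_sub_one_mul_self hv hp0]
      _ ≤ u ^ p / K + K ^ (p - 1) * v ^ p := le_add_of_nonneg_left (by positivity)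

lemma rpow_sub_one_mul_abs_add_abs_le (hp : 1 ≤ p) {u k : ℝ} (x y : ℝ) (hu : 0 ≤ u)
    (hk : 0 ≤ k) :
    u ^ (p - 1) * (k * (|x| + |y|)) ≤ u ^ p / 4 + 8 ^ (p - 1) * k ^ p * (|x| ^ p + |y| ^ p) := by
  have hx := rpow_sub_one_mul_le hp (by norm_num : (0 : ℝ) < 8) hu (by positivity : 0 ≤ k * |x|)
  have hy := rpow_sub_one_mul_le hp (by norm_num : (0 : ℝ) < 8) hu (by positivity : 0 ≤ k * |y|)
  rw [Real.mul_rpow hk (abs_nonneg _)] at hx hy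
  linarith

end Inequalities

theorem stmt_18 (p : ℝ) (hp : 1 < p) :
    ∃ C : ℝ, 0 < C ∧
      ∀ x y a b : ℝ, 0 ≤ a → 0 ≤ b →
        1 / 4 * |x - y| ^ p * (a ^ p + b ^ p) - C * (|x| ^ p + |y| ^ p) * |a - b| ^ p ≤
          |x - y| ^ (p - 2) * (x - y) * (a ^ p * x - b ^ p * y) := by
  refine ⟨2 * 8 ^ (p - 1) * (p / 2) ^ p, by positivity, fun x y a b ha hb => ?_⟩
  set A := |x - y|
  set s := |x - y| ^ (p - 2) * (x - y)
  set k := p / 2 * |a - b|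
  have hA : 0 ≤ A := abs_nonneg _
  have hk : 0 ≤ k := by positivity
  have hsplit : s * (a ^ p * x - b ^ p * y)
      = (a ^ p + b ^ p) / 2 * A ^ p + (a ^ p - b ^ p) / 2 * (s * (x + y)) := by
    rw [← abs_rpow_sub_two_mul_self (x - y) (by linarith : p ≠ 0)]; ring
  have hcross : |a ^ p - b ^ p| * |s * (x + y)|
      ≤ 2 * ((A * a) ^ (p - 1) * (k * (|x| + |y|)) + (A * b) ^ (p - 1) * (k * (|x| + |y|))) := by
    rw [abs_mul s, abs_abs_rpow_sub_two_mul (x - y) hp.ne', Real.mul_rpow hA ha,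
      Real.mul_rpow hA hb]
    calc |a ^ p - b ^ p| * (A ^ (p - 1) * |x + y|)
        ≤ p * (a ^ (p - 1) + b ^ (p - 1)) * |a - b| * (A ^ (p - 1) * (|x| + |y|)) := by
          gcongr
          · exact abs_rpow_sub_rpow_le hp ha hb
          · exact abs_add_le x y
      _ = _ := by ring
  have hya := rpow_sub_one_mul_abs_add_abs_le hp.le x y (mul_nonneg hA ha) hk
  have hyb := rpow_sub_one_mul_abs_add_abs_le hp.le x y (mul_nonneg hA hb) hk
  have hkp : k ^ p = (p / 2) ^ p * |a - b| ^ p := Real.mul_rpow (by positivity) (abs_nonneg _)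
  rw [Real.mul_rpow (z := p) hA ha, hkp] at hya
  rw [Real.mul_rpow (z := p) hA hb, hkp] at hyb
  have hlow := neg_abs_le ((a ^ p - b ^ p) / 2 * (s * (x + y)))
  rw [abs_mul, abs_div, abs_two] at hlow
  rw [hsplit]
  linarith

end NLP
end
end
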